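/- arXiv:1005.2514 — 13 statements merged into one kernel-verified Lean document; each statement's English description precedes it below -/
import Mathlib

section
/- Let t : ℕ → Fin 2 be the Thue–Morse sequence, where t(n) is the parity of the number of 1s in the binary expansion of n. Then for every n ≥ 1 and every k with 1 ≤ k < 2^n, we have t(2^(n+1) - 1 + k) ≠ t(2^(n+1) - 1 + 2k). -/
open Fin.NatCast

/-!
Write `m = k - 1`. The two arguments are `2^(n+1) + m` and `2^(n+1) + (2m + 1)`, both with
`m, 2m + 1 < 2^(n+1)`, so the leading bit adds one `1` to each binary expansion; and the binary
expansion of `2m + 1` is that of `m` with an extra `1` in front. Hence the bit counts differ by one.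
-/

namespace Nat

theorem digits_add_base_pow_mul {b s m d : ℕ} (hb : 1 < b) (hm : m < b ^ s) (hd : 0 < d)
    (hdb : d < b) :
    digits b (m + b ^ s * d) =
      digits b m ++ List.replicate (s - (digits b m).length) 0 ++ [d] := by
  have hlen : (digits b m).length ≤ s := (digits_length_le_iff hb m).2 hm
  rw [← digits_of_lt b d hd.ne' hdb, digits_append_zeroes_append_digits hb hd,
    Nat.add_sub_cancel' hlen]

theorem count_one_digits_two_add_two_pow {s m : ℕ} (hm : m < 2 ^ s) :
    (digits 2 (m + 2 ^ s)).count 1 = (digits 2 m).count 1 + 1 := by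
  simpa [List.count_replicate] using
    congrArg (List.count 1) (digits_add_base_pow_mul one_lt_two hm one_pos one_lt_two)

theorem count_one_digits_two_bit_one (m : ℕ) :
    (digits 2 (1 + 2 * m)).count 1 = (digits 2 m).count 1 + 1 := by
  rw [digits_add 2 one_lt_two 1 m one_lt_two (Or.inl one_ne_zero), List.count_cons_self]

end Nat

theorem stmt_2_general (t : ℕ → Fin 2)
    (ht : ∀ n, t n = ((Nat.digits 2 n).count 1 : Fin 2))
    (n k : ℕ) (hk1 : 1 ≤ k) (hk2 : k < 2 ^ n) :
    t (2 ^ (n + 1) - 1 + k) ≠ t (2 ^ (n + 1) - 1 + 2 * k) := by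
  have hpow : 2 ^ (n + 1) = 2 * 2 ^ n := by ring
  have hk : 2 ^ (n + 1) - 1 + k = (k - 1) + 2 ^ (n + 1) := by omega
  have h2k : 2 ^ (n + 1) - 1 + 2 * k = (1 + 2 * (k - 1)) + 2 ^ (n + 1) := by omega
  rw [ht, ht, hk, h2k, Nat.count_one_digits_two_add_two_pow (by omega),
    Nat.count_one_digits_two_add_two_pow (by omega), Nat.count_one_digits_two_bit_one]
  push_cast
  simp

/-- For the Thue–Morse sequence `t` (parity of the number of 1 bits), for every `n ≥ 1` and
`1 ≤ k < 2^n`, we have `t (2^(n+1) - 1 + k) ≠ t (2^(n+1) - 1 + 2k)`. -/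
theorem stmt_2 (t : ℕ → Fin 2)
    (ht : ∀ n, t n = ((Nat.digits 2 n).count 1 : Fin 2))
    (n k : ℕ) (hn : 1 ≤ n) (hk1 : 1 ≤ k) (hk2 : k < 2 ^ n) :
    t (2 ^ (n + 1) - 1 + k) ≠ t (2 ^ (n + 1) - 1 + 2 * k) :=
  stmt_2_general t ht n k hk1 hk2
end

section
/- Let t : ℕ → Fin 2 be the Thue–Morse sequence. For every k ≥ 1, if m = 2^(⌊log₂(k+1)⌋ + 1) + 1, then t(0) = t(m) = t(2m) = ... = t((k+1)m), i.e., t(i·m) = 0 for all 0 ≤ i ≤ k+1. -/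
/-!
For `0 < i < 2 ^ N`, the product `i * (2 ^ N + 1) = i + 2 ^ N * i` is written in binary as two
copies of `i` separated by zeros, so it has twice as many ones as `i` and the Thue–Morse
sequence vanishes there.
-/

theorem Nat.count_one_digits_mul_two_pow_add_one {i N : ℕ} (hi : i < 2 ^ N) :
    (Nat.digits 2 (i * (2 ^ N + 1))).count 1 = 2 * (Nat.digits 2 i).count 1 := by
  rcases Nat.eq_zero_or_pos i with rfl | hipos
  · simp
  have hlen : (Nat.digits 2 i).length ≤ N := (Nat.digits_length_le_iff (by norm_num) i).2 hi
  have hsplit : i * (2 ^ N + 1) =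
      i + 2 ^ ((Nat.digits 2 i).length + (N - (Nat.digits 2 i).length)) * i := by
    rw [Nat.add_sub_cancel' hlen]; ring
  rw [hsplit, ← Nat.digits_append_zeroes_append_digits (by norm_num) hipos]
  simp only [List.count_append, List.count_replicate, beq_iff_eq, zero_ne_one, if_false]
  omega

open Fin.NatCast in
theorem stmt_3_general (t : ℕ → Fin 2)
    (ht : ∀ n, t n = ((Nat.digits 2 n).count 1 : Fin 2))
    (k : ℕ) (m : ℕ) (hm : m = 2 ^ (Nat.log 2 (k + 1) + 1) + 1) :
    ∀ i ≤ k + 1, t (i * m) = t 0 := by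
  intro i hi
  have hi_lt : i < 2 ^ (Nat.log 2 (k + 1) + 1) :=
    hi.trans_lt (Nat.lt_pow_succ_log_self (by norm_num) _)
  rw [ht, ht, hm, Nat.count_one_digits_mul_two_pow_add_one hi_lt]
  simp [Fin.ext_iff, Nat.mul_mod_right]

open Fin.NatCast in
/-- For the Thue–Morse sequence `t`, for every `k ≥ 1`, with
`m = 2^(⌊log₂ (k+1)⌋ + 1) + 1`, we have `t (i * m) = t 0` for all `0 ≤ i ≤ k + 1`. -/
theorem stmt_3 (t : ℕ → Fin 2)
    (ht : ∀ n, t n = ((Nat.digits 2 n).count 1 : Fin 2))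
    (k : ℕ) (hk : 1 ≤ k) (m : ℕ) (hm : m = 2 ^ (Nat.log 2 (k + 1) + 1) + 1) :
    ∀ i ≤ k + 1, t (i * m) = t 0 :=
  stmt_3_general t ht k m hm
end

section
/- Every suffix of the Thue–Morse word begins in an Abelian k-power for every positive integer k. That is, for every n ≥ 0 and every k ≥ 1, there exists ℓ ≥ 1 such that the k consecutive blocks t(n..n+ℓ), t(n+ℓ..n+2ℓ), ..., t(n+(k-1)ℓ..n+kℓ) of the Thue–Morse sequence are pairwise Abelian equivalent. -/
/-!
Write `n = 2a + r` with `r ∈ {0, 1}` and take blocks of length `2s`. Since `t (2m) + t (2m + 1) = 1`,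
a block starting at an even position `2b` contains exactly `s` ones; shifting it by one position
changes that count by `t (b + s) - t b`. So it suffices to choose `s` with `t (a + i s) = t a` for all
`i ≤ k`, and `s = 2 ^ a (2 ^ k + 1)` works: the binary expansion of `a + i s` is that of `a`, then
zeros, then that of `i` written twice, so it has the parity of `a`.
-/

namespace ThueMorse

open Finset

def thueMorse (n : ℕ) : ℕ := (Nat.digits 2 n).count 1 % 2

lemma thueMorse_lt_two (n : ℕ) : thueMorse n < 2 := Nat.mod_lt _ two_pos

lemma count_digits_add_base_pow_mul {b L c : ℕ} (hb : 1 < b) (hc : c < b ^ L) (d : ℕ) {a : ℕ}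
    (ha : a ≠ 0) :
    (Nat.digits b (c + b ^ L * d)).count a = (Nat.digits b c).count a + (Nat.digits b d).count a := by
  rcases Nat.eq_zero_or_pos d with rfl | hd
  · simp
  have hlen : (Nat.digits b c).length ≤ L := (Nat.digits_length_le_iff hb c).mpr hc
  rw [← Nat.add_sub_cancel' hlen, ← Nat.digits_append_zeroes_append_digits hb hd]
  simp [List.count_replicate, Ne.symm ha]

lemma thueMorse_two_mul (m : ℕ) : thueMorse (2 * m) = thueMorse m := by
  have h := count_digits_add_base_pow_mul (L := 1) one_lt_two zero_lt_two m one_ne_zero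
  simp only [pow_one, zero_add, Nat.digits_zero, List.count_nil] at h
  rw [thueMorse, thueMorse, h]

lemma thueMorse_two_mul_add_one (m : ℕ) : thueMorse (2 * m + 1) = 1 - thueMorse m := by
  have h := count_digits_add_base_pow_mul (L := 1) one_lt_two one_lt_two m one_ne_zero
  simp only [pow_one, add_comm 1, Nat.digits_of_lt 2 1 one_ne_zero one_lt_two,
    List.count_singleton_self] at h
  rw [thueMorse, thueMorse, h]
  omega

lemma thueMorse_add_mul_two_pow_mul_two_pow_add_one {c L i M : ℕ} (hc : c < 2 ^ L)
    (hi : i < 2 ^ M) : thueMorse (c + i * (2 ^ L * (2 ^ M + 1))) = thueMorse c := by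
  have hsq : i * (2 ^ L * (2 ^ M + 1)) = 2 ^ L * (i + 2 ^ M * i) := by ring
  rw [thueMorse, thueMorse, hsq, count_digits_add_base_pow_mul one_lt_two hc _ one_ne_zero,
    count_digits_add_base_pow_mul one_lt_two hi _ one_ne_zero]
  omega

lemma sum_Ico_two_mul_thueMorse (b s : ℕ) : ∑ x ∈ Ico (2 * b) (2 * (b + s)), thueMorse x = s := by
  induction s with
  | zero => simp
  | succ s ih =>
    have hle : 2 * b ≤ 2 * (b + s) := by omega
    rw [show 2 * (b + (s + 1)) = 2 * (b + s) + 1 + 1 by ring,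
      sum_Ico_succ_top (by omega), sum_Ico_succ_top hle, ih, add_assoc,
      thueMorse_two_mul, thueMorse_two_mul_add_one]
    have := thueMorse_lt_two (b + s)
    omega

lemma sum_Ico_two_mul_add_one_thueMorse {b s : ℕ} (h : thueMorse (b + s) = thueMorse b) :
    ∑ x ∈ Ico (2 * b + 1) (2 * (b + s) + 1), thueMorse x = s := by
  have hshift := sum_Ico_succ_top (f := thueMorse) (show 2 * b ≤ 2 * (b + s) by omega)
  rw [sum_eq_sum_Ico_succ_bot (by omega), sum_Ico_two_mul_thueMorse, thueMorse_two_mul,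
    thueMorse_two_mul, h] at hshift
  omega

end ThueMorse

open ThueMorse Finset in
theorem stmt_5_general (t : ℕ → Fin 2)
    (ht : ∀ n, t n = Fin.ofNat 2 ((Nat.digits 2 n).count 1))
    (n k : ℕ) :
    ∃ ℓ ≥ 1, ∀ i < k, ∀ j < k,
      (∑ x ∈ Finset.Ico (n + i * ℓ) (n + (i + 1) * ℓ), (t x).val) =
        ∑ x ∈ Finset.Ico (n + j * ℓ) (n + (j + 1) * ℓ), (t x).val := by
  have htm : ∀ x, (t x).val = thueMorse x := fun x => by rw [ht, Fin.val_ofNat]; rfl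
  obtain ⟨a, ha⟩ := Nat.even_or_odd' n
  set s := 2 ^ a * (2 ^ k + 1)
  have hstable : ∀ i ≤ k, thueMorse (a + i * s) = thueMorse a := fun i hi =>
    thueMorse_add_mul_two_pow_mul_two_pow_add_one a.lt_two_pow_self (hi.trans_lt k.lt_two_pow_self)
  have hblock : ∀ i < k, ∑ x ∈ Ico (n + i * (2 * s)) (n + (i + 1) * (2 * s)), (t x).val = s := by
    intro i hi
    have hend : thueMorse (a + i * s + s) = thueMorse (a + i * s) := by
      rw [hstable i hi.le, ← hstable (i + 1) hi, add_mul, one_mul, add_assoc]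
    simp only [htm]
    rcases ha with rfl | rfl
    · convert sum_Ico_two_mul_thueMorse (a + i * s) s using 3 <;> ring
    · convert sum_Ico_two_mul_add_one_thueMorse hend using 3 <;> ring
  refine ⟨2 * s, Nat.one_le_iff_ne_zero.mpr (by positivity), fun i hi j hj => ?_⟩
  rw [hblock i hi, hblock j hj]

/-- Every suffix of the Thue–Morse word begins in an Abelian `k`-power for every `k ≥ 1`:
there is `ℓ ≥ 1` such that the `k` consecutive blocks of length `ℓ` starting at position `n`
are pairwise Abelian equivalent (same number of 1s, being binary words of equal length). -/
theorem stmt_5 (t : ℕ → Fin 2)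
    (ht : ∀ n, t n = Fin.ofNat 2 ((Nat.digits 2 n).count 1))
    (n k : ℕ) (hk : 1 ≤ k) :
    ∃ ℓ ≥ 1, ∀ i < k, ∀ j < k,
      (∑ x ∈ Finset.Ico (n + i * ℓ) (n + (i + 1) * ℓ), (t x).val) =
        ∑ x ∈ Finset.Ico (n + j * ℓ) (n + (j + 1) * ℓ), (t x).val :=
  stmt_5_general t ht n k
end

section
/- Let μ be the Thue–Morse morphism 0 ↦ 01, 1 ↦ 10, let z be an infinite binary word and x = μ(z). If an Abelian 3-power with period ℓ occurs in x at position 2n+1 (0-indexed), then ℓ is even, say ℓ = 2k, and z(n) = z(n+k) = z(n+2k). -/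
/-!
Let `P m` be the weight of the prefix of length `m` of `x = μ(z)`. Since `μ(0)` and `μ(1)` both
have weight one, `P (2b) = b` and `P (2b + 1) = b + z b`. Three consecutive blocks of equal weight
mean that `P` takes values in arithmetic progression at their endpoints. If `ℓ = 2k` the
endpoints are odd, giving `2 z (n + k) = z n + z (n + 2k)`, which forces the three letters to
agree. If `ℓ` is odd, the endpoints of the last two blocks are even, odd, even, and the
progression collapses to `2 z (n + 2k + 1) = 1`, which is impossible.
-/

open Finset

lemma Fin.two_val_add_val_one_sub (a : Fin 2) : a.val + (1 - a).val = 1 := by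
  fin_cases a <;> rfl

lemma sum_range_arithmetic_of_Ico_sums_eq {f : ℕ → ℕ} {p ℓ : ℕ}
    (hab : ∀ i < 3, ∀ j < 3,
      ∑ m ∈ Ico (p + i * ℓ) (p + (i + 1) * ℓ), f m =
        ∑ m ∈ Ico (p + j * ℓ) (p + (j + 1) * ℓ), f m) :
    2 * ∑ m ∈ range (p + ℓ), f m =
        ∑ m ∈ range p, f m + ∑ m ∈ range (p + 2 * ℓ), f m ∧
      2 * ∑ m ∈ range (p + 2 * ℓ), f m =
        ∑ m ∈ range (p + ℓ), f m + ∑ m ∈ range (p + 3 * ℓ), f m := by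
  have h01 := hab 0 (by norm_num) 1 (by norm_num)
  have h12 := hab 1 (by norm_num) 2 (by norm_num)
  norm_num at h01 h12
  have b0 := sum_range_add_sum_Ico f (Nat.le_add_right p ℓ)
  have b1 := sum_range_add_sum_Ico f (by omega : p + ℓ ≤ p + 2 * ℓ)
  have b2 := sum_range_add_sum_Ico f (by omega : p + 2 * ℓ ≤ p + 3 * ℓ)
  omega

section ThueMorse

variable {z x : ℕ → Fin 2} (hx : ∀ n, x (2 * n) = z n ∧ x (2 * n + 1) = 1 - z n)
include hx

lemma sum_range_two_mul_eq (b : ℕ) : ∑ m ∈ range (2 * b), (x m).val = b := by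
  induction b with
  | zero => simp
  | succ b ih =>
    rw [show 2 * (b + 1) = 2 * b + 1 + 1 by ring, sum_range_succ, sum_range_succ, ih,
      (hx b).1, (hx b).2, add_assoc, Fin.two_val_add_val_one_sub]

lemma sum_range_two_mul_add_one_eq (b : ℕ) :
    ∑ m ∈ range (2 * b + 1), (x m).val = b + (z b).val := by
  rw [sum_range_succ, sum_range_two_mul_eq hx, (hx b).1]

end ThueMorse

theorem stmt_6_general (z x : ℕ → Fin 2)
    (hx : ∀ n, x (2 * n) = z n ∧ x (2 * n + 1) = 1 - z n)
    (n ℓ : ℕ)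
    (hab : ∀ i < 3, ∀ j < 3,
      (∑ m ∈ Finset.Ico (2 * n + 1 + i * ℓ) (2 * n + 1 + (i + 1) * ℓ), (x m).val) =
        ∑ m ∈ Finset.Ico (2 * n + 1 + j * ℓ) (2 * n + 1 + (j + 1) * ℓ), (x m).val) :
    ∃ k, ℓ = 2 * k ∧ z n = z (n + k) ∧ z n = z (n + 2 * k) := by
  obtain ⟨h01, h12⟩ := sum_range_arithmetic_of_Ico_sums_eq hab
  have hz : ∀ m, (z m).val < 2 := fun m => (z m).isLt
  obtain ⟨k, rfl | rfl⟩ := Nat.even_or_odd' ℓ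
  · rw [show 2 * n + 1 + 2 * k = 2 * (n + k) + 1 by ring,
      show 2 * n + 1 + 2 * (2 * k) = 2 * (n + 2 * k) + 1 by ring,
      sum_range_two_mul_add_one_eq hx, sum_range_two_mul_add_one_eq hx,
      sum_range_two_mul_add_one_eq hx] at h01
    have := hz n; have := hz (n + k); have := hz (n + 2 * k)
    exact ⟨k, rfl, Fin.ext (by omega), Fin.ext (by omega)⟩
  · rw [show 2 * n + 1 + (2 * k + 1) = 2 * (n + k + 1) by ring,
      show 2 * n + 1 + 2 * (2 * k + 1) = 2 * (n + 2 * k + 1) + 1 by ring,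
      show 2 * n + 1 + 3 * (2 * k + 1) = 2 * (n + 3 * k + 2) by ring,
      sum_range_two_mul_eq hx, sum_range_two_mul_add_one_eq hx, sum_range_two_mul_eq hx] at h12
    omega

/-- Let `μ` be the Thue–Morse morphism `0 ↦ 01`, `1 ↦ 10`, and `x = μ(z)`, i.e.
`x (2n) = z n` and `x (2n+1) = 1 - z n`. If an Abelian 3-power of period `ℓ` occurs in `x`
at position `2n + 1`, then `ℓ = 2k` for some `k` and `z n = z (n + k) = z (n + 2k)`. -/
theorem stmt_6 (z x : ℕ → Fin 2)
    (hx : ∀ n, x (2 * n) = z n ∧ x (2 * n + 1) = 1 - z n)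
    (n ℓ : ℕ) (hℓ : 1 ≤ ℓ)
    (hab : ∀ i < 3, ∀ j < 3,
      (∑ m ∈ Finset.Ico (2 * n + 1 + i * ℓ) (2 * n + 1 + (i + 1) * ℓ), (x m).val) =
        ∑ m ∈ Finset.Ico (2 * n + 1 + j * ℓ) (2 * n + 1 + (j + 1) * ℓ), (x m).val) :
    ∃ k, ℓ = 2 * k ∧ z n = z (n + k) ∧ z n = z (n + 2 * k) :=
  stmt_6_general z x hx n ℓ hab
end

section
/- For every n ≥ 1, if an Abelian 3-power occurs in the Thue–Morse word at position 2^(n+2) - 1 (0-indexed), then its period is at least 2^(n+1). -/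
open Fin.NatCast

/-!
Write `P N` for the number of ones among the first `N` letters of the Thue–Morse word `t`.
Since `t (2k) + t (2k+1) = 1`, we have `P (2k) = k` and `P (2k+1) = k + t k`.

Let `p = 2^(n+2) - 1`, which is odd. If the period `ℓ` is odd, the second and third blocks
together form a factor of length `2ℓ` starting at the even position `p + ℓ`, so it has exactly
`ℓ` ones and the two blocks cannot have the same weight. If `ℓ = 2q` is even, the formula for
`P` at odd arguments shows that the first two blocks have equal weight only when
`t M + t (M + 2q) = 2 t (M + q)` with `M = 2^(n+1) - 1`, i.e. only when
`t (M + q) = t (M + 2q)`. For `1 ≤ q ≤ 2^n` both indices lie in `[2^(n+1), 2^(n+2))`, and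
`M + 2q - 2^(n+1) = 2 (M + q - 2^(n+1)) + 1`, so the two letters differ.
-/

open Finset

/-- The Thue–Morse word with letters in `ℕ`, so that weights of factors are sums of naturals. -/
def thueMorse (k : ℕ) : ℕ := (Nat.digits 2 k).count 1 % 2

lemma thueMorse_le_one (k : ℕ) : thueMorse k ≤ 1 :=
  Nat.le_of_lt_succ (Nat.mod_lt _ two_pos)

lemma thueMorse_two_mul (k : ℕ) : thueMorse (2 * k) = thueMorse k := by
  rcases eq_or_ne k 0 with rfl | hk
  · rfl
  · rw [thueMorse, thueMorse, ← zero_add (2 * k),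
      Nat.digits_add 2 one_lt_two 0 k two_pos (.inr hk)]
    simp

lemma thueMorse_two_mul_add_one (k : ℕ) : thueMorse (2 * k + 1) = 1 - thueMorse k := by
  rw [thueMorse, thueMorse, add_comm, Nat.digits_add 2 one_lt_two 1 k one_lt_two (by simp),
    List.count_cons_self]
  omega

lemma thueMorse_two_pow_add {k m : ℕ} (hm : m < 2 ^ k) :
    thueMorse (2 ^ k + m) = 1 - thueMorse m := by
  have hlen : (Nat.digits 2 m).length ≤ k := (Nat.digits_length_le_iff one_lt_two m).2 hm
  have hdigits := Nat.digits_append_zeroes_append_digits (b := 2)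
    (k := k - (Nat.digits 2 m).length) (m := 1) (n := m) one_lt_two one_pos
  rw [Nat.add_sub_cancel' hlen, mul_one, add_comm] at hdigits
  rw [thueMorse, thueMorse, ← hdigits, List.count_append, List.count_append,
    Nat.digits_of_lt 2 1 one_ne_zero one_lt_two, List.count_singleton_self,
    List.count_replicate]
  simp only [Nat.reduceBEq, Bool.false_eq_true, ↓reduceIte, add_zero]
  omega

lemma sum_Ico_two_mul_thueMorse {a b : ℕ} (hab : a ≤ b) :
    ∑ m ∈ Ico (2 * a) (2 * b), thueMorse m = b - a := by
  induction b, hab using Nat.le_induction with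
  | base => simp
  | succ b hab ih =>
    rw [show 2 * (b + 1) = 2 * b + 1 + 1 by ring, sum_Ico_succ_top (by omega),
      sum_Ico_succ_top (by omega), ih, thueMorse_two_mul, thueMorse_two_mul_add_one]
    have := thueMorse_le_one b
    omega

lemma sum_Ico_two_mul_add_one_thueMorse {a b : ℕ} (hab : a ≤ b) :
    (∑ m ∈ Ico (2 * a + 1) (2 * b + 1), thueMorse m) + thueMorse a = b - a + thueMorse b := by
  have h := sum_Ico_succ_top (Nat.mul_le_mul_left 2 hab) thueMorse
  rw [sum_eq_sum_Ico_succ_bot (by omega), sum_Ico_two_mul_thueMorse hab, thueMorse_two_mul,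
    thueMorse_two_mul] at h
  omega

lemma sum_Ico_thueMorse_ne_of_odd {s ℓ : ℕ} (hs : Even s) (hℓ : Odd ℓ) :
    ∑ m ∈ Ico s (s + ℓ), thueMorse m ≠ ∑ m ∈ Ico (s + ℓ) (s + 2 * ℓ), thueMorse m := by
  obtain ⟨a, rfl⟩ := even_iff_two_dvd.mp hs
  intro h
  have hsum := sum_Ico_two_mul_thueMorse (a := a) (b := a + ℓ) (by omega)
  rw [mul_add, ← sum_Ico_consecutive _ (by omega : 2 * a ≤ 2 * a + ℓ) (by omega)] at hsum
  obtain ⟨q, rfl⟩ := hℓ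
  omega

lemma thueMorse_two_pow_sub_one_add_ne {k q : ℕ} (hq : 1 ≤ q) (hqk : q ≤ 2 ^ k) :
    thueMorse (2 ^ (k + 1) - 1 + q) ≠ thueMorse (2 ^ (k + 1) - 1 + 2 * q) := by
  have hpow : 2 ^ (k + 1) = 2 * 2 ^ k := pow_succ' 2 k
  rw [show 2 ^ (k + 1) - 1 + q = 2 ^ (k + 1) + (q - 1) by omega,
    show 2 ^ (k + 1) - 1 + 2 * q = 2 ^ (k + 1) + (2 * (q - 1) + 1) by omega,
    thueMorse_two_pow_add (by omega), thueMorse_two_pow_add (by omega), thueMorse_two_mul_add_one]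
  have := thueMorse_le_one (q - 1)
  omega

lemma sum_Ico_thueMorse_two_pow_sub_one_ne_of_even {k ℓ : ℕ} (hℓ : Even ℓ) (hℓ₀ : 0 < ℓ)
    (hℓk : ℓ ≤ 2 ^ (k + 1)) :
    ∑ m ∈ Ico (2 ^ (k + 2) - 1) (2 ^ (k + 2) - 1 + ℓ), thueMorse m ≠
      ∑ m ∈ Ico (2 ^ (k + 2) - 1 + ℓ) (2 ^ (k + 2) - 1 + 2 * ℓ), thueMorse m := by
  obtain ⟨q, rfl⟩ := hℓ
  have hpow : 2 ^ (k + 2) = 2 * 2 ^ (k + 1) := pow_succ' 2 (k + 1)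
  have hpow' : 2 ^ (k + 1) = 2 * 2 ^ k := pow_succ' 2 k
  set M := 2 ^ (k + 1) - 1
  have h₁ := sum_Ico_two_mul_add_one_thueMorse (a := M) (b := M + q) (by omega)
  have h₂ := sum_Ico_two_mul_add_one_thueMorse (a := M + q) (b := M + 2 * q) (by omega)
  rw [show 2 * M + 1 = 2 ^ (k + 2) - 1 by omega,
    show 2 * (M + q) + 1 = 2 ^ (k + 2) - 1 + (q + q) by omega] at h₁
  rw [show 2 * (M + q) + 1 = 2 ^ (k + 2) - 1 + (q + q) by omega,
    show 2 * (M + 2 * q) + 1 = 2 ^ (k + 2) - 1 + 2 * (q + q) by omega] at h₂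
  have hne : thueMorse (M + q) ≠ thueMorse (M + 2 * q) :=
    thueMorse_two_pow_sub_one_add_ne (by omega) (by omega)
  have := thueMorse_le_one M
  have := thueMorse_le_one (M + q)
  have := thueMorse_le_one (M + 2 * q)
  omega

theorem stmt_7_general (t : ℕ → Fin 2)
    (ht : ∀ n, t n = ((Nat.digits 2 n).count 1 : Fin 2))
    (n ℓ : ℕ) (hℓ : 1 ≤ ℓ)
    (hab : ∀ i < 3, ∀ j < 3,
      (∑ m ∈ Finset.Ico (2 ^ (n + 2) - 1 + i * ℓ) (2 ^ (n + 2) - 1 + (i + 1) * ℓ),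
          (t m).val) =
        ∑ m ∈ Finset.Ico (2 ^ (n + 2) - 1 + j * ℓ) (2 ^ (n + 2) - 1 + (j + 1) * ℓ),
          (t m).val) :
    2 ^ (n + 1) ≤ ℓ := by
  have ht' (m : ℕ) : (t m).val = thueMorse m := by rw [ht m, Fin.val_natCast, thueMorse]
  have h01 := hab 0 (by norm_num) 1 (by norm_num)
  have h12 := hab 1 (by norm_num) 2 (by norm_num)
  simp only [ht', zero_mul, add_zero, zero_add, one_mul, Nat.reduceAdd] at h01 h12
  by_contra! hsmall
  rcases Nat.even_or_odd ℓ with hev | hodd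
  · exact sum_Ico_thueMorse_two_pow_sub_one_ne_of_even hev hℓ hsmall.le h01
  · have hp : Odd (2 ^ (n + 2) - 1) :=
      Nat.Even.sub_odd Nat.one_le_two_pow (by simp [pow_succ]) odd_one
    refine sum_Ico_thueMorse_ne_of_odd (hp.add_odd hodd) hodd ?_
    rwa [add_assoc, ← two_mul, add_assoc, show ℓ + 2 * ℓ = 3 * ℓ by ring]

/-- For every `n ≥ 1`, if an Abelian 3-power occurs in the Thue–Morse word at position
`2^(n+2) - 1`, then its period is at least `2^(n+1)`. -/
theorem stmt_7 (t : ℕ → Fin 2)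
    (ht : ∀ n, t n = ((Nat.digits 2 n).count 1 : Fin 2))
    (n ℓ : ℕ) (hn : 1 ≤ n) (hℓ : 1 ≤ ℓ)
    (hab : ∀ i < 3, ∀ j < 3,
      (∑ m ∈ Finset.Ico (2 ^ (n + 2) - 1 + i * ℓ) (2 ^ (n + 2) - 1 + (i + 1) * ℓ),
          (t m).val) =
        ∑ m ∈ Finset.Ico (2 ^ (n + 2) - 1 + j * ℓ) (2 ^ (n + 2) - 1 + (j + 1) * ℓ),
          (t m).val) :
    2 ^ (n + 1) ≤ ℓ :=
  stmt_7_general t ht n ℓ hℓ hab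
end

section
/- Neither 0·TM nor 1·TM has an Abelian cube as a prefix, where TM is the Thue–Morse word. That is, for a ∈ {0,1}, there is no ℓ ≥ 1 such that the three consecutive length-ℓ blocks of the word a·t(0)t(1)t(2)... starting at position 0 are pairwise Abelian equivalent. -/
/-!
Let `S n` count the `1`s among the first `n` letters of `a·TM`. Since `t (2n) t (2n+1)` is `01`
or `10`, the Thue–Morse word has exactly `n` ones among its first `2n` letters. An Abelian cube
prefix with blocks of length `ℓ` forces `S (2ℓ) = 2 S ℓ` and `S (3ℓ) = 3 S ℓ`. For `ℓ = 2k+1`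
this reads `3(a + k) = a + 3k + 1`, impossible by parity. For `ℓ = 2k+2` and `x = t (2k)`, using
`t (4k+2) = t (2k+1) = 1 - x`, it reads `2(a + k + x) = a + 2k + 2 - x`, i.e. `a + 3x = 2`, which
has no solution with `a, x ∈ {0, 1}`.
-/

open Fin.NatCast

theorem Nat.count_one_digits_two_two_mul (n : ℕ) :
    (Nat.digits 2 (2 * n)).count 1 = (Nat.digits 2 n).count 1 := by
  rcases Nat.eq_zero_or_pos n with rfl | hn
  · rfl
  · rw [Nat.digits_def' one_lt_two (by omega)]
    simp

theorem Nat.count_one_digits_two_two_mul_add_one (n : ℕ) :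
    (Nat.digits 2 (2 * n + 1)).count 1 = (Nat.digits 2 n).count 1 + 1 := by
  rw [Nat.digits_def' one_lt_two (by omega), show (2 * n + 1) % 2 = 1 by omega,
    show (2 * n + 1) / 2 = n by omega]
  simp

theorem Finset.sum_range_mul_eq_nsmul_of_blocks {M : Type*} [AddCommMonoid M] (f : ℕ → M)
    (ℓ n : ℕ) (h : ∀ i < n, ∑ m ∈ Ico (i * ℓ) ((i + 1) * ℓ), f m = ∑ m ∈ range ℓ, f m) :
    ∑ m ∈ range (n * ℓ), f m = n • ∑ m ∈ range ℓ, f m := by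
  induction n with
  | zero => simp
  | succ n ih =>
    rw [← sum_range_add_sum_Ico f (Nat.mul_le_mul_right ℓ n.le_succ),
      ih fun i hi ↦ h i (by omega), h n n.lt_succ_self, succ_nsmul]

def IsThueMorse (t : ℕ → Fin 2) : Prop :=
  ∀ n, t n = ((Nat.digits 2 n).count 1 : Fin 2)

namespace IsThueMorse

variable {t : ℕ → Fin 2}

theorem two_mul (ht : IsThueMorse t) (n : ℕ) : t (2 * n) = t n := by
  rw [ht, ht, Nat.count_one_digits_two_two_mul]

theorem val_two_mul_add_val_two_mul_add_one (ht : IsThueMorse t) (n : ℕ) :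
    (t (2 * n)).val + (t (2 * n + 1)).val = 1 := by
  have hflip : t (2 * n + 1) = t (2 * n) + 1 := by
    rw [ht, ht, Nat.count_one_digits_two_two_mul_add_one, Nat.count_one_digits_two_two_mul,
      Nat.cast_succ]
  rw [hflip]
  generalize t (2 * n) = x
  fin_cases x <;> rfl

theorem sum_range_two_mul (ht : IsThueMorse t) (n : ℕ) :
    ∑ m ∈ Finset.range (2 * n), (t m).val = n := by
  induction n with
  | zero => rfl
  | succ n ih =>
    rw [show 2 * (n + 1) = 2 * n + 1 + 1 by ring, Finset.sum_range_succ, Finset.sum_range_succ,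
      ih, add_assoc, ht.val_two_mul_add_val_two_mul_add_one]

theorem sum_range_two_mul_add_one (ht : IsThueMorse t) (n : ℕ) :
    ∑ m ∈ Finset.range (2 * n + 1), (t m).val = n + (t (2 * n)).val := by
  rw [Finset.sum_range_succ, ht.sum_range_two_mul]

variable {s : ℕ → Fin 2}

theorem cons_sum_range_succ (hs : ∀ n, s (n + 1) = t n) (n : ℕ) :
    ∑ m ∈ Finset.range (n + 1), (s m).val = (s 0).val + ∑ m ∈ Finset.range n, (t m).val := by
  simp [Finset.sum_range_succ', hs, add_comm]

theorem cons_sum_range_three_mul_ne (ht : IsThueMorse t) (hs : ∀ n, s (n + 1) = t n) (k : ℕ) :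
    ∑ m ∈ Finset.range (3 * (2 * k + 1)), (s m).val ≠
      3 * ∑ m ∈ Finset.range (2 * k + 1), (s m).val := by
  rw [show 3 * (2 * k + 1) = 2 * (3 * k + 1) + 1 by ring, cons_sum_range_succ hs,
    cons_sum_range_succ hs, ht.sum_range_two_mul, ht.sum_range_two_mul]
  omega

theorem cons_sum_range_two_mul_ne (ht : IsThueMorse t) (hs : ∀ n, s (n + 1) = t n) (k : ℕ) :
    ∑ m ∈ Finset.range (2 * (2 * k + 2)), (s m).val ≠
      2 * ∑ m ∈ Finset.range (2 * k + 2), (s m).val := by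
  rw [show 2 * (2 * k + 2) = 2 * (2 * k + 1) + 1 + 1 by ring, cons_sum_range_succ hs,
    cons_sum_range_succ hs, ht.sum_range_two_mul_add_one, ht.sum_range_two_mul_add_one,
    ht.two_mul]
  have hpair := ht.val_two_mul_add_val_two_mul_add_one k
  have hs0 := (s 0).isLt
  omega

end IsThueMorse

theorem stmt_9_general (t : ℕ → Fin 2)
    (ht : ∀ n, t n = ((Nat.digits 2 n).count 1 : Fin 2))
    (s : ℕ → Fin 2) (hs : ∀ n, s (n + 1) = t n) :
    ¬ ∃ ℓ ≥ 1, ∀ i < 3, ∀ j < 3,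
      (∑ m ∈ Finset.Ico (i * ℓ) ((i + 1) * ℓ), (s m).val) =
        ∑ m ∈ Finset.Ico (j * ℓ) ((j + 1) * ℓ), (s m).val := by
  rintro ⟨ℓ, hℓ, h⟩
  have hprefix (n : ℕ) (hn : n ≤ 3) :
      ∑ m ∈ Finset.range (n * ℓ), (s m).val = n * ∑ m ∈ Finset.range ℓ, (s m).val := by
    rw [← smul_eq_mul]
    refine Finset.sum_range_mul_eq_nsmul_of_blocks (fun m ↦ (s m).val) ℓ n fun i hi ↦ ?_
    have hblock := h i (by omega) 0 (by omega)
    rwa [zero_mul, zero_add, one_mul, ← Finset.range_eq_Ico] at hblock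
  obtain ⟨k, rfl | rfl⟩ := Nat.even_or_odd' ℓ
  · obtain ⟨k, rfl⟩ : ∃ j, k = j + 1 := ⟨k - 1, by omega⟩
    exact IsThueMorse.cons_sum_range_two_mul_ne ht hs k (hprefix 2 (by norm_num))
  · exact IsThueMorse.cons_sum_range_three_mul_ne ht hs k (hprefix 3 (by norm_num))

/-- Neither `0·TM` nor `1·TM` has an Abelian cube as a prefix: for `a ∈ {0,1}` and `s`
the word `a` followed by the Thue–Morse word, there is no `ℓ ≥ 1` such that the three
consecutive length-`ℓ` blocks of `s` starting at position 0 are pairwise Abelian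
equivalent. -/
theorem stmt_9 (t : ℕ → Fin 2)
    (ht : ∀ n, t n = ((Nat.digits 2 n).count 1 : Fin 2))
    (a : Fin 2) (s : ℕ → Fin 2) (hs0 : s 0 = a) (hs : ∀ n, s (n + 1) = t n) :
    ¬ ∃ ℓ ≥ 1, ∀ i < 3, ∀ j < 3,
      (∑ m ∈ Finset.Ico (i * ℓ) ((i + 1) * ℓ), (s m).val) =
        ∑ m ∈ Finset.Ico (j * ℓ) ((j + 1) * ℓ), (s m).val :=
  stmt_9_general t ht s hs
end

section
/- Let g be the morphism on binary words given by g(0) = 0111110 and g(1) = 01110, and let z be its fixed point beginning with 0. Then no prefix of z is an Abelian square: there is no n ≥ 1 such that the blocks z(0..n) and z(n..2n) are Abelian equivalent. -/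
/-!
Count zeros instead of ones: `z[0, 2n)` is an Abelian square iff the excess
`2 #₀ z[0, n) - #₀ z[0, 2n)` vanishes. Every image `σ a` contains exactly two zeros and has
length `5 + 2 #₀ a`, so if `n = |σ (z[0, m))| + r` with `r < |σ (z m)|`, then `2n` lies within
a bounded distance of `|σ (z[0, 2m))|`. Hence the excess at `n`, the letter `z n` and the window
`z[2n-2, 2n+5)` are determined by the same data at `m` together with `r`: a finite automaton.
Its 38 states reachable from `1 ≤ n ≤ 6` all have nonzero excess.
-/

namespace AbelianSquarePrefix

section Factor

variable {α : Type*} (z : ℕ → α)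

def factor (i n : ℕ) : List α := (List.range n).map fun t => z (i + t)

@[simp] lemma length_factor (i n : ℕ) : (factor z i n).length = n := by simp [factor]

@[simp] lemma getElem_factor (i n t : ℕ) (h : t < (factor z i n).length) :
    (factor z i n)[t] = z (i + t) := by simp [factor]

lemma factor_add (i n k : ℕ) : factor z i (n + k) = factor z i n ++ factor z (i + n) k := by
  simp only [factor, List.range_add, List.map_append, List.map_map]
  congr 1
  exact List.map_congr_left fun t _ => by simp [add_assoc]

lemma factor_one (i : ℕ) : factor z i 1 = [z i] := by simp [factor]

lemma factor_eq_take_drop {i n p q : ℕ} (h : p + q ≤ n) :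
    factor z (i + p) q = ((factor z i n).drop p).take q := by
  apply List.ext_getElem (by simp; omega)
  intro t h1 h2
  simp [add_assoc]

lemma factor_congr {z' : ℕ → α} {i n : ℕ} (h : ∀ t < i + n, z t = z' t) :
    factor z i n = factor z' i n :=
  List.map_congr_left fun t ht => h _ (by simp at ht; omega)

end Factor

section FixedPoint

variable {α : Type*} (g : α → List α) (z : ℕ → α)

def imageLength (m : ℕ) : ℕ := ((factor z 0 m).flatMap g).length

lemma imageLength_add (k j : ℕ) :
    imageLength g z (k + j) = imageLength g z k + ((factor z k j).flatMap g).length := by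
  simp [imageLength, factor_add, List.flatMap_append]

lemma imageLength_succ (m : ℕ) :
    imageLength g z (m + 1) = imageLength g z m + (g (z m)).length := by
  simp [imageLength_add, factor_one]

lemma exists_eq_imageLength_add (hg : ∀ a, g a ≠ []) (n : ℕ) :
    ∃ m r, r < (g (z m)).length ∧ n = imageLength g z m + r := by
  induction n with
  | zero => exact ⟨0, 0, List.length_pos_iff.2 (hg _), by simp [imageLength, factor]⟩
  | succ n ih =>
    obtain ⟨m, r, hr, rfl⟩ := ih
    by_cases hr' : r + 1 < (g (z m)).length
    · exact ⟨m, r + 1, hr', rfl⟩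
    · refine ⟨m + 1, 0, List.length_pos_iff.2 (hg _), ?_⟩
      rw [imageLength_succ]
      omega

lemma mul_length_le_length_flatMap {c : ℕ} (hg : ∀ a, c ≤ (g a).length) (l : List α) :
    c * l.length ≤ (l.flatMap g).length := by
  induction l with
  | nil => simp
  | cons a l ih =>
    simp only [List.flatMap_cons, List.length_append, List.length_cons, mul_add, mul_one]
    have := hg a
    omega

section Iterate

variable {a : α} (hz : ∀ m i (h : i < ((fun l => l.flatMap g)^[m] [a]).length),
  z i = ((fun l => l.flatMap g)^[m] [a]).get ⟨i, h⟩)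
include hz

lemma factor_zero_eq_take {m n : ℕ} (h : n ≤ ((fun l => l.flatMap g)^[m] [a]).length) :
    factor z 0 n = ((fun l => l.flatMap g)^[m] [a]).take n :=
  List.ext_getElem (by simpa using h) fun i h1 _ => by
    simpa using hz m i (by simp at h1; omega)

theorem factor_imageLength (hg : ∀ b, 2 ≤ (g b).length) (m : ℕ) :
    factor z 0 (imageLength g z m) = (factor z 0 m).flatMap g := by
  have hlen : ∀ M, M < ((fun l => l.flatMap g)^[M] [a]).length := by
    intro M
    induction M with
    | zero => simp
    | succ M ih =>
      rw [Function.iterate_succ_apply']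
      have := mul_length_le_length_flatMap g hg ((fun l => l.flatMap g)^[M] [a])
      omega
  have hm := factor_zero_eq_take g z hz (hlen m).le
  have hsplit : (fun l => l.flatMap g)^[m + 1] [a] =
      (factor z 0 m).flatMap g ++ (((fun l => l.flatMap g)^[m] [a]).drop m).flatMap g := by
    rw [hm, ← List.flatMap_append, List.take_append_drop, Function.iterate_succ_apply']
  rw [factor_zero_eq_take g z hz (m := m + 1) (by rw [hsplit]; simp [imageLength]), hsplit,
    imageLength, List.take_left]

end Iterate

variable {g z} (hfix : ∀ m, factor z 0 (imageLength g z m) = (factor z 0 m).flatMap g)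
include hfix

lemma factor_imageLength_flatMap (k j : ℕ) :
    factor z (imageLength g z k) ((factor z k j).flatMap g).length = (factor z k j).flatMap g := by
  have h := hfix (k + j)
  rw [imageLength_add, factor_add, factor_add, List.flatMap_append, hfix k, zero_add,
    zero_add] at h
  exact List.append_cancel_left h

lemma factor_imageLength_add {k j p q : ℕ} (h : p + q ≤ ((factor z k j).flatMap g).length) :
    factor z (imageLength g z k + p) q = (((factor z k j).flatMap g).drop p).take q := by
  rw [factor_eq_take_drop z h, factor_imageLength_flatMap hfix]

lemma apply_imageLength_add {k j p : ℕ} (h : p < ((factor z k j).flatMap g).length) :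
    z (imageLength g z k + p) = ((factor z k j).flatMap g)[p] := by
  rw [List.getElem_of_eq (factor_imageLength_flatMap hfix k j).symm h, getElem_factor]

end FixedPoint

section Morphism

def σ : Fin 2 → List (Fin 2) := ![[0, 1, 1, 1, 1, 1, 0], [0, 1, 1, 1, 0]]

lemma count_zero_flatMap_σ (l : List (Fin 2)) : (l.flatMap σ).count 0 = 2 * l.length := by
  induction l with
  | nil => rfl
  | cons a l ih =>
    rw [List.flatMap_cons, List.count_append, ih, List.length_cons]
    fin_cases a <;> simp [σ] <;> ring

lemma length_flatMap_σ (l : List (Fin 2)) :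
    (l.flatMap σ).length = 5 * l.length + 2 * l.count 0 := by
  induction l with
  | nil => rfl
  | cons a l ih =>
    rw [List.flatMap_cons, List.length_append, ih, List.length_cons]
    fin_cases a <;> simp [σ] <;> ring

lemma length_σ_le_seven (a : Fin 2) : (σ a).length ≤ 7 := by
  fin_cases a <;> decide

variable (z : ℕ → Fin 2)

lemma imageLength_σ (m : ℕ) : imageLength σ z m = 5 * m + 2 * (factor z 0 m).count 0 := by
  rw [imageLength, length_flatMap_σ, length_factor]

def excess (n : ℕ) : ℤ := 2 * (factor z 0 n).count 0 - (factor z 0 (2 * n)).count 0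

lemma sum_val_add_count_zero (n : ℕ) :
    ∑ i ∈ Finset.range n, (z i).val + (factor z 0 n).count 0 = n := by
  induction n with
  | zero => rfl
  | succ n ih =>
    rw [Finset.sum_range_succ, factor_add, List.count_append, factor_one]
    have hletter : ∀ a : Fin 2, a.val + [a].count 0 = 1 := by decide
    have := hletter (z n)
    rw [zero_add]
    omega

lemma excess_eq_zero_of_sum_eq {n : ℕ}
    (h : ∑ i ∈ Finset.Ico 0 n, (z i).val = ∑ i ∈ Finset.Ico n (2 * n), (z i).val) :
    excess z n = 0 := by
  have hsplit : ∑ i ∈ Finset.Ico 0 n, (z i).val + ∑ i ∈ Finset.Ico n (2 * n), (z i).val =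
      ∑ i ∈ Finset.Ico 0 (2 * n), (z i).val :=
    Finset.sum_Ico_consecutive _ n.zero_le (by omega)
  simp only [← Finset.range_eq_Ico] at h hsplit
  have := sum_val_add_count_zero z n
  have := sum_val_add_count_zero z (2 * n)
  unfold excess
  omega

end Morphism

section Automaton

abbrev State := ℤ × Fin 2 × List (Fin 2)

def state (z : ℕ → Fin 2) (n : ℕ) : State := (excess z n, z n, factor z (2 * n - 2) 7)

/- With `n = imageLength σ z m + r`, `r < |σ (z m)|` and `w = z[2m-2, 2m+5)`, the position `2 * n`
lies `p` letters after `imageLength σ z (2 * m - 2)`, inside `w.flatMap σ`. As every image has two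
zeros, `z[0, n)` and `z[0, 2n)` then contain `2m + #₀ (σ (z m))[0, r)` and
`2(2m - 2) + #₀ (σ w)[0, p)` zeros. -/
def step : State → ℕ → State
  | (e, a, w), r =>
    let p := (((w.take 2).flatMap σ).length + 2 * r + 2 * e).toNat
    (2 * (((σ a).take r).count 0 : ℤ) + 4 - ((w.flatMap σ).take p).count 0,
      (σ a).getD r 0, ((w.flatMap σ).drop (p - 2)).take 7)

/- The closure under `step` of the states of `1 ≤ n ≤ 6`. -/
def reachable : List State := [
  (-3, 0, [0, 0, 1, 1, 1, 0, 0]),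
  (-3, 0, [0, 0, 1, 1, 1, 1, 1]),
  (-3, 0, [0, 1, 1, 1, 1, 1, 0]),
  (-3, 0, [1, 1, 0, 0, 1, 1, 1]),
  (-3, 0, [1, 1, 1, 1, 0, 0, 1]),
  (-3, 1, [0, 1, 1, 1, 0, 0, 1]),
  (-3, 1, [0, 1, 1, 1, 1, 1, 0]),
  (-2, 0, [1, 0, 0, 1, 1, 1, 0]),
  (-2, 0, [1, 0, 0, 1, 1, 1, 1]),
  (-2, 1, [1, 0, 0, 1, 1, 1, 0]),
  (-2, 1, [1, 0, 0, 1, 1, 1, 1]),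
  (-1, 0, [0, 0, 1, 1, 1, 0, 0]),
  (-1, 0, [0, 0, 1, 1, 1, 1, 1]),
  (-1, 0, [0, 1, 1, 1, 0, 0, 1]),
  (-1, 0, [0, 1, 1, 1, 1, 1, 0]),
  (-1, 0, [1, 1, 0, 0, 1, 1, 1]),
  (-1, 0, [1, 1, 1, 1, 0, 0, 1]),
  (-1, 0, [1, 1, 1, 1, 1, 0, 0]),
  (-1, 1, [0, 0, 1, 1, 1, 0, 0]),
  (-1, 1, [0, 0, 1, 1, 1, 1, 1]),
  (-1, 1, [1, 1, 1, 0, 0, 1, 1]),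
  (-1, 1, [1, 1, 1, 1, 1, 0, 0]),
  (1, 0, [0, 0, 1, 1, 1, 1, 1]),
  (1, 0, [0, 1, 1, 1, 0, 0, 1]),
  (1, 0, [1, 1, 0, 0, 1, 1, 1]),
  (1, 0, [1, 1, 1, 0, 0, 1, 1]),
  (1, 0, [1, 1, 1, 1, 0, 0, 1]),
  (1, 0, [1, 1, 1, 1, 1, 0, 0]),
  (1, 1, [0, 1, 1, 1, 0, 0, 1]),
  (1, 1, [0, 1, 1, 1, 1, 1, 0]),
  (1, 1, [1, 1, 0, 0, 1, 1, 1]),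
  (1, 1, [1, 1, 1, 1, 0, 0, 1]),
  (2, 1, [1, 0, 0, 1, 1, 1, 0]),
  (2, 1, [1, 0, 0, 1, 1, 1, 1]),
  (3, 0, [1, 1, 0, 0, 1, 1, 1]),
  (3, 1, [0, 0, 1, 1, 1, 0, 0]),
  (3, 1, [1, 1, 1, 0, 0, 1, 1]),
  (3, 1, [1, 1, 1, 1, 1, 0, 0])
]

lemma step_mem_reachable :
    ∀ s ∈ reachable, ∀ r < (σ s.2.1).length, step s r ∈ reachable := by
  decide

lemma excess_ne_zero_of_mem_reachable : ∀ s ∈ reachable, s.1 ≠ 0 := by decide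

lemma excess_bounds_of_mem_reachable : ∀ s ∈ reachable, -3 ≤ s.1 ∧ s.1 ≤ 3 := by decide

variable {z : ℕ → Fin 2}

lemma take_two_factor (i : ℕ) : (factor z i 7).take 2 = factor z i 2 := by
  simpa using (factor_eq_take_drop z (i := i) (p := 0) (q := 2) (by norm_num)).symm

lemma two_mul_imageLength_add {m : ℕ} (hm : 1 ≤ m) (r : ℕ) :
    (2 * (imageLength σ z m + r) : ℤ) = imageLength σ z (2 * m - 2) +
      (((factor z (2 * m - 2) 7).take 2).flatMap σ).length + 2 * r + 2 * excess z m := by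
  have h2m := imageLength_add σ z (2 * m - 2) 2
  rw [show 2 * m - 2 + 2 = 2 * m by omega, imageLength_σ z (2 * m)] at h2m
  rw [take_two_factor, imageLength_σ z m, excess]
  push_cast
  omega

lemma state_congr {z' : ℕ → Fin 2} {n : ℕ} (hn : 1 ≤ n)
    (h : ∀ i < 2 * n + 5, z i = z' i) :
    state z n = state z' n := by
  simp only [state, excess]
  rw [factor_congr z (n := n) (fun i hi => h i (by omega)),
    factor_congr z (n := 2 * n) (fun i hi => h i (by omega)),
    factor_congr z (i := 2 * n - 2) (n := 7) (fun i hi => h i (by omega)), h n (by omega)]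

variable (hfix : ∀ m, factor z 0 (imageLength σ z m) = (factor z 0 m).flatMap σ)
include hfix

lemma count_zero_factor_imageLength_add {k j p : ℕ}
    (h : p ≤ ((factor z k j).flatMap σ).length) :
    (factor z 0 (imageLength σ z k + p)).count 0 =
      2 * k + (((factor z k j).flatMap σ).take p).count 0 := by
  have hp := factor_imageLength_add hfix (p := 0) (q := p) (by simpa using h)
  rw [add_zero, List.drop_zero] at hp
  rw [factor_add, List.count_append, zero_add, hfix, hp, count_zero_flatMap_σ, length_factor]

lemma state_imageLength_add {m r : ℕ} (hm : 1 ≤ m) (he : -3 ≤ excess z m ∧ excess z m ≤ 3)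
    (hr : r < (σ (z m)).length) :
    state z (imageLength σ z m + r) = step (state z m) r := by
  have hσ : (factor z m 1).flatMap σ = σ (z m) := by simp [factor_one]
  have htwice := two_mul_imageLength_add (z := z) hm r
  have hr7 := length_σ_le_seven (z m)
  set w := factor z (2 * m - 2) 7 with hw_def
  set p := ((((w.take 2).flatMap σ).length + 2 * r + 2 * excess z m)).toNat with hp_def
  have hw := length_flatMap_σ w
  have hw2 := length_flatMap_σ (w.take 2)
  have hcount : (w.take 2).count 0 ≤ w.count 0 := (List.take_sublist 2 w).count_le 0
  rw [length_factor] at hw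
  rw [List.length_take, length_factor] at hw2
  have h2n : 2 * (imageLength σ z m + r) = imageLength σ z (2 * m - 2) + p := by omega
  have hp : 2 ≤ p ∧ p + 5 ≤ (w.flatMap σ).length := by omega
  simp only [state, step, ← hw_def, ← hp_def]
  refine Prod.ext ?_ (Prod.ext ?_ ?_)
  · rw [excess, h2n, count_zero_factor_imageLength_add hfix (hσ ▸ hr.le),
      count_zero_factor_imageLength_add hfix (j := 7) (by rw [← hw_def]; omega), ← hw_def,
      hσ]
    push_cast
    omega
  · rw [apply_imageLength_add hfix (hσ ▸ hr), List.getD_eq_getElem _ _ hr]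
    simp only [hσ]
  · rw [show 2 * (imageLength σ z m + r) - 2 = imageLength σ z (2 * m - 2) + (p - 2) by omega,
      factor_imageLength_add hfix (j := 7) (by rw [← hw_def]; omega)]

lemma factor_zero_thirtyNine : factor z 0 39 = (σ 0).flatMap σ := by
  have hz0 : z 0 = 0 := by
    have h := factor_imageLength_add hfix (k := 0) (j := 1) (p := 0) (q := 1)
      (by rw [length_flatMap_σ, length_factor]; omega)
    have hhead : ∀ a, (σ a).take 1 = [0] := by decide
    simpa [imageLength, factor, hhead] using h
  have h7 := hfix 1
  rw [imageLength, factor_one, hz0, List.flatMap_singleton,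
    show (σ 0).length = 7 from rfl] at h7
  have h39 := hfix 7
  rwa [imageLength, h7, show ((σ 0).flatMap σ).length = 39 from rfl] at h39

lemma state_mem_reachable_of_le_six {n : ℕ} (h1 : 1 ≤ n) (h6 : n ≤ 6) :
    state z n ∈ reachable := by
  have hz : ∀ i < 39, z i = ((σ 0).flatMap σ).getD i 0 := fun i hi => by
    rw [← factor_zero_thirtyNine hfix, List.getD_eq_getElem _ _ (by simpa), getElem_factor,
      zero_add]
  rw [state_congr h1 fun i hi => hz i (by omega)]
  interval_cases n <;> decide

theorem state_mem_reachable {n : ℕ} (hn : 1 ≤ n) : state z n ∈ reachable := by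
  induction n using Nat.strong_induction_on with
  | _ n ih =>
  rcases le_or_gt n 6 with h6 | h6
  · exact state_mem_reachable_of_le_six hfix hn h6
  obtain ⟨m, r, hr, rfl⟩ := exists_eq_imageLength_add σ z (by decide) n
  have hm : 1 ≤ m := Nat.one_le_iff_ne_zero.2 fun hm => by
    subst hm
    simp only [imageLength, factor, List.range_zero, List.map_nil, List.flatMap_nil,
      List.length_nil, zero_add] at h6
    have := length_σ_le_seven (z 0)
    omega
  have hst := ih m (by rw [imageLength_σ]; omega) hm
  rw [state_imageLength_add hfix hm (excess_bounds_of_mem_reachable _ hst) hr]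
  exact step_mem_reachable _ hst r hr

end Automaton

end AbelianSquarePrefix

open AbelianSquarePrefix in
/-- Let `g` be the morphism `0 ↦ 0111110`, `1 ↦ 01110` and `z` its fixed point beginning
with `0` (so every iterate `g^[m] 0` is a prefix of `z`). Then no prefix of `z` is an
Abelian square: there is no `n ≥ 1` such that `z(0..n)` and `z(n..2n)` have the same
number of 1s. -/
theorem stmt_10 (g : Fin 2 → List (Fin 2))
    (hg0 : g 0 = [0, 1, 1, 1, 1, 1, 0]) (hg1 : g 1 = [0, 1, 1, 1, 0])
    (z : ℕ → Fin 2)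
    (hz : ∀ m : ℕ, ∀ i : ℕ, ∀ h : i < ((fun l => l.flatMap g)^[m] [0]).length,
      z i = ((fun l => l.flatMap g)^[m] [0]).get ⟨i, h⟩) :
    ¬ ∃ n ≥ 1,
      (∑ i ∈ Finset.Ico 0 n, (z i).val) = ∑ i ∈ Finset.Ico n (2 * n), (z i).val := by
  obtain rfl : g = σ := funext fun a => by fin_cases a <;> assumption
  have hfix := factor_imageLength σ z hz (by decide)
  rintro ⟨n, hn, hsum⟩
  exact excess_ne_zero_of_mem_reachable _ (state_mem_reachable hfix hn)
    (excess_eq_zero_of_sum_eq z hsum)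
end

section
/- Let g be the morphism 0 ↦ 0111110, 1 ↦ 01110 and z its fixed point starting with 0. If uv is a prefix of z with u and v Abelian equivalent and nonempty, then there exist Abelian equivalent words w₁, w₂ with u = g(w₁), v = g(w₂), and w₁w₂ a prefix of z. -/
/-!
Every image `σ c` contains exactly two `0`s, and each of its nonempty proper prefixes exactly one.
Hence a prefix of `σ(W)` containing an even number of `0`s is the image of a prefix of `W`.
This applies first to `uv`, which has `2|u|₀` zeros, giving `uv = σ(W)`; then `|W| = |u|₀`, and
`2|u| = |σ(W)| = 5|W| + 2|W|₀` shows that `|W|` is even, so it applies to `u` as well. Finally the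
Parikh vector of `σ(w)` is `(2|w|, 3|w| + 2|w|₀)`, which determines that of `w`.
-/

namespace List

variable {α β : Type*}

theorem exists_prefix_of_prefix_flatMap (g : α → List β) :
    ∀ {W : List α} {s : List β}, s <+: W.flatMap g →
      ∃ w q, w <+: W ∧ s = w.flatMap g ++ q ∧ (q = [] ∨ ∃ c, q <+: g c ∧ q ≠ g c)
  | [], s, hs => ⟨[], [], nil_prefix, by simpa using hs, Or.inl rfl⟩
  | c :: W, s, hs => by
    rw [flatMap_cons] at hs
    by_cases hc : g c <+: s
    · obtain ⟨s', rfl⟩ := hc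
      obtain ⟨w, q, hw, rfl, hq⟩ :=
        exists_prefix_of_prefix_flatMap g ((prefix_append_right_inj _).mp hs)
      exact ⟨c :: w, q, cons_prefix_cons.mpr ⟨rfl, hw⟩, by simp, hq⟩
    · refine ⟨[], s, nil_prefix, by simp, ?_⟩
      have hsc : s <+: g c :=
        (prefix_or_prefix_of_prefix hs (prefix_append _ _)).resolve_right hc
      exact (eq_or_ne s []).imp_right
        fun _ => ⟨c, hsc, fun h => hc (h ▸ prefix_refl _)⟩

theorem prefix_of_getElem_eq {l L : List α} (z : ℕ → α) (hle : l.length ≤ L.length)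
    (hl : ∀ i (h : i < l.length), l[i] = z i) (hL : ∀ i (h : i < L.length), L[i] = z i) :
    l <+: L :=
  prefix_iff_getElem.mpr ⟨hle, fun i hi => (hl i hi).trans (hL i _).symm⟩

end List

open List

def σ : Fin 2 → List (Fin 2) := ![[0, 1, 1, 1, 1, 1, 0], [0, 1, 1, 1, 0]]

theorem count_zero_add_count_one (w : List (Fin 2)) : w.count 0 + w.count 1 = w.length := by
  induction w with
  | nil => rfl
  | cons c w ih => fin_cases c <;> simp <;> omega

theorem count_zero_flatMap_σ (w : List (Fin 2)) : (w.flatMap σ).count 0 = 2 * w.length := by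
  induction w with
  | nil => rfl
  | cons c w ih =>
    rw [flatMap_cons, count_append, ih]
    fin_cases c <;> simp [σ] <;> ring

theorem count_one_flatMap_σ (w : List (Fin 2)) :
    (w.flatMap σ).count 1 = 3 * w.length + 2 * w.count 0 := by
  induction w with
  | nil => rfl
  | cons c w ih =>
    rw [flatMap_cons, count_append, ih]
    fin_cases c <;> simp [σ] <;> ring

theorem length_flatMap_σ (w : List (Fin 2)) :
    (w.flatMap σ).length = 5 * w.length + 2 * w.count 0 := by
  have := count_zero_add_count_one (w.flatMap σ)
  rw [count_zero_flatMap_σ, count_one_flatMap_σ] at this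
  omega

theorem prefix_σ_of_even_count {c : Fin 2} {q : List (Fin 2)} (hq : q <+: σ c)
    (he : Even (q.count 0)) : q = [] ∨ q = σ c := by
  have key : ∀ c, ∀ q ∈ (σ c).inits, Even (q.count 0) → q = [] ∨ q = σ c := by decide
  exact key c q ((mem_inits _ _).mpr hq) he

theorem exists_prefix_eq_flatMap_σ {W s : List (Fin 2)} (hs : s <+: W.flatMap σ)
    (he : Even (s.count 0)) : ∃ w, w <+: W ∧ s = w.flatMap σ := by
  obtain ⟨w, q, hw, rfl, hq⟩ := exists_prefix_of_prefix_flatMap σ hs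
  suffices q = [] by rw [this, append_nil]; exact ⟨w, hw, rfl⟩
  rcases hq with hq | ⟨c, hqc, hne⟩
  · exact hq
  · rw [count_append, count_zero_flatMap_σ] at he
    have hqe : Even (q.count 0) := (Nat.even_add.mp he).mp (even_two_mul _)
    exact (prefix_σ_of_even_count hqc hqe).resolve_right hne

theorem perm_of_perm_flatMap_σ {w₁ w₂ : List (Fin 2)} (h : w₁.flatMap σ ~ w₂.flatMap σ) :
    w₁ ~ w₂ := by
  have h0 := h.count_eq 0
  have h1 := h.count_eq 1
  rw [count_zero_flatMap_σ, count_zero_flatMap_σ] at h0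
  rw [count_one_flatMap_σ, count_one_flatMap_σ] at h1
  have e₁ := count_zero_add_count_one w₁
  have e₂ := count_zero_add_count_one w₂
  refine perm_iff_count.mpr fun c => ?_
  fin_cases c <;> simp <;> omega

theorem even_count_zero_of_append_eq_flatMap_σ {u v W : List (Fin 2)} (huv : u ~ v)
    (h : u ++ v = W.flatMap σ) : Even (u.count 0) := by
  have hc := congrArg (count 0) h
  have hl := congrArg length h
  rw [count_append, ← huv.count_eq, count_zero_flatMap_σ] at hc
  rw [length_append, ← huv.length_eq, length_flatMap_σ] at hl
  exact Nat.even_iff.mpr (by omega)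

theorem lt_length_iterate_flatMap_σ (m : ℕ) : m < ((fun l => l.flatMap σ)^[m] [0]).length := by
  induction m with
  | zero => simp
  | succ m ih =>
    rw [Function.iterate_succ_apply', length_flatMap_σ]
    omega

theorem stmt_11_general (g : Fin 2 → List (Fin 2))
    (hg0 : g 0 = [0, 1, 1, 1, 1, 1, 0]) (hg1 : g 1 = [0, 1, 1, 1, 0])
    (z : ℕ → Fin 2)
    (hz : ∀ m : ℕ, ∀ i : ℕ, ∀ h : i < ((fun l => l.flatMap g)^[m] [0]).length,
      z i = ((fun l => l.flatMap g)^[m] [0]).get ⟨i, h⟩)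
    (u v : List (Fin 2))
    (huv : ∀ c : Fin 2, u.count c = v.count c)
    (hpre : ∀ i : ℕ, ∀ h : i < (u ++ v).length, (u ++ v).get ⟨i, h⟩ = z i) :
    ∃ w₁ w₂ : List (Fin 2), (∀ c : Fin 2, w₁.count c = w₂.count c) ∧
      u = w₁.flatMap g ∧ v = w₂.flatMap g ∧
      ∀ i : ℕ, ∀ h : i < (w₁ ++ w₂).length, (w₁ ++ w₂).get ⟨i, h⟩ = z i := by
  obtain rfl : g = σ := funext fun c => by fin_cases c <;> assumption
  set P : ℕ → List (Fin 2) := fun m => (fun l => l.flatMap σ)^[m] [0]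
  have hperm : u ~ v := perm_iff_count.mpr huv
  set n := (u ++ v).length
  have hpref : u ++ v <+: (P n).flatMap σ := by
    rw [show (P n).flatMap σ = P (n + 1) from (Function.iterate_succ_apply' _ n [0]).symm]
    exact prefix_of_getElem_eq z (Nat.le_succ n |>.trans (lt_length_iterate_flatMap_σ _).le)
      hpre (fun i hi => (hz (n + 1) i hi).symm)
  have heven : Even ((u ++ v).count 0) := by
    rw [count_append, ← hperm.count_eq]; exact ⟨_, rfl⟩
  obtain ⟨W, hW, hWuv⟩ := exists_prefix_eq_flatMap_σ hpref heven
  obtain ⟨w₁, ⟨w₂, rfl⟩, hu⟩ := exists_prefix_eq_flatMap_σ ⟨v, hWuv⟩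
    (even_count_zero_of_append_eq_flatMap_σ hperm hWuv)
  have hv : v = w₂.flatMap σ := by
    rw [flatMap_append, ← hu] at hWuv; exact append_cancel_left hWuv
  refine ⟨w₁, w₂, perm_iff_count.mp (perm_of_perm_flatMap_σ (hu ▸ hv ▸ hperm)), hu, hv,
    fun i hi => ?_⟩
  rw [hz n i (hi.trans_le hW.length_le)]
  exact hW.getElem hi

/-- Let `g` be `0 ↦ 0111110`, `1 ↦ 01110` and `z` its fixed point starting with `0`.
If `u ++ v` is a prefix of `z` with `u, v` nonempty and Abelian equivalent, then there are
Abelian equivalent words `w₁, w₂` with `u = g(w₁)`, `v = g(w₂)`, and `w₁ ++ w₂` a prefix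
of `z`. -/
theorem stmt_11 (g : Fin 2 → List (Fin 2))
    (hg0 : g 0 = [0, 1, 1, 1, 1, 1, 0]) (hg1 : g 1 = [0, 1, 1, 1, 0])
    (z : ℕ → Fin 2)
    (hz : ∀ m : ℕ, ∀ i : ℕ, ∀ h : i < ((fun l => l.flatMap g)^[m] [0]).length,
      z i = ((fun l => l.flatMap g)^[m] [0]).get ⟨i, h⟩)
    (u v : List (Fin 2)) (hu : u ≠ []) (hv : v ≠ [])
    (huv : ∀ c : Fin 2, u.count c = v.count c)
    (hpre : ∀ i : ℕ, ∀ h : i < (u ++ v).length, (u ++ v).get ⟨i, h⟩ = z i) :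
    ∃ w₁ w₂ : List (Fin 2), (∀ c : Fin 2, w₁.count c = w₂.count c) ∧
      u = w₁.flatMap g ∧ v = w₂.flatMap g ∧
      ∀ i : ℕ, ∀ h : i < (w₁ ++ w₂).length, (w₁ ++ w₂).get ⟨i, h⟩ = z i :=
  stmt_11_general g hg0 hg1 z hz u v huv hpre
end

section
/- An infinite word over a finite alphabet has bounded Abelian complexity if and only if it is C-balanced for some C > 0. -/
/-!
Sliding a window of length `n` by one position changes the number of occurrences of a letter
`b` by at most one, so every count of `b` between those of two windows is realised by some
window (a discrete intermediate value theorem). Windows with distinct counts have distinct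
Parikh vectors, so if there are at most `C` Parikh vectors, two counts differ by less than `C`.
Conversely, in a `C`-balanced word every Parikh vector of length `n` lies in the box of side
`2C + 1` around that of the prefix of length `n`, which has `(2C + 1) ^ |A|` points.
-/

section DiscreteIVT

variable {f : ℕ → ℤ}

theorem Set.uIcc_subset_range_of_abs_sub_le_one (hf : ∀ r, |f (r + 1) - f r| ≤ 1) (p q : ℕ) :
    Set.uIcc (f p) (f q) ⊆ Set.range f := by
  wlog hpq : p ≤ q generalizing p q
  · rw [Set.uIcc_comm]
    exact this q p (le_of_not_ge hpq)
  induction q, hpq using Nat.le_induction with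
  | base => simp
  | succ q _ ih =>
    refine Set.uIcc_subset_uIcc_union_uIcc.trans (Set.union_subset ih ?_)
    -- consecutive values differ by at most one, so no integer lies strictly between them
    intro k hk
    have := abs_le.mp (hf q)
    rcases eq_or_ne k (f q) with rfl | hne
    · exact ⟨q, rfl⟩
    · exact ⟨q + 1, by rw [Set.mem_uIcc] at hk; omega⟩

theorem natAbs_sub_lt_card_of_forall_mem (hf : ∀ r, |f (r + 1) - f r| ≤ 1) {T : Finset ℤ}
    (hT : ∀ r, f r ∈ T) (p q : ℕ) : (f p - f q).natAbs < T.card := by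
  have hsub : Finset.uIcc (f q) (f p) ⊆ T := fun k hk => by
    rw [← Finset.mem_coe, Finset.coe_uIcc] at hk
    obtain ⟨r, rfl⟩ := Set.uIcc_subset_range_of_abs_sub_le_one hf q p hk
    exact hT r
  have := Finset.card_le_card hsub
  rw [Int.card_uIcc] at this
  omega

end DiscreteIVT

section Parikh

variable {A : Type*} [DecidableEq A]

def parikhVector (x : ℕ → A) (n p : ℕ) (b : A) : ℕ :=
  (List.ofFn fun j : Fin n => x (p + j)).count b

variable (x : ℕ → A) (n : ℕ) (b : A)

theorem parikhVector_succ_left (p : ℕ) :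
    parikhVector x (n + 1) p b = parikhVector x n (p + 1) b + if x p = b then 1 else 0 := by
  simp [parikhVector, List.ofFn_succ, List.count_cons, add_assoc, add_comm 1]

theorem parikhVector_succ_right (p : ℕ) :
    parikhVector x (n + 1) p b = parikhVector x n p b + if x (p + n) = b then 1 else 0 := by
  rw [parikhVector, List.ofFn_succ', List.concat_eq_append, List.count_append]
  simp [parikhVector, List.count_singleton]

theorem abs_parikhVector_succ_sub_le_one (p : ℕ) :
    |(parikhVector x n (p + 1) b : ℤ) - parikhVector x n p b| ≤ 1 := by
  have h := (parikhVector_succ_left x n b p).symm.trans (parikhVector_succ_right x n b p)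
  rw [abs_le]
  split_ifs at h <;> omega

theorem abs_parikhVector_sub_lt_card {S : Finset (A → ℕ)} (hS : ∀ p, parikhVector x n p ∈ S)
    (p q : ℕ) : |(parikhVector x n p b : ℤ) - parikhVector x n q b| < S.card := by
  have := natAbs_sub_lt_card_of_forall_mem (f := fun r => (parikhVector x n r b : ℤ))
    (abs_parikhVector_succ_sub_le_one x n b) (T := S.image fun v => (v b : ℤ))
    (fun r => Finset.mem_image_of_mem _ (hS r)) p q
  rw [Int.abs_eq_natAbs]
  exact_mod_cast this.trans_le Finset.card_image_le

theorem exists_parikhVector_mem_card_le [Fintype A] (C : ℕ)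
    (hC : ∀ p b, |(parikhVector x n p b : ℤ) - parikhVector x n 0 b| ≤ C) :
    ∃ S : Finset (A → ℕ), S.card ≤ (2 * C + 1) ^ Fintype.card A ∧
      ∀ p, parikhVector x n p ∈ S := by
  refine ⟨Fintype.piFinset fun b => Finset.Icc (parikhVector x n 0 b - C)
    (parikhVector x n 0 b + C), ?_, fun p => Fintype.mem_piFinset.mpr fun b => ?_⟩
  · rw [Fintype.card_piFinset]
    exact Finset.prod_le_pow_card _ _ _ fun b _ => by rw [Nat.card_Icc]; omega
  · have := abs_le.mp (hC p b)
    rw [Finset.mem_Icc]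
    omega

end Parikh

/-- An infinite word over a finite alphabet has bounded Abelian complexity if and only if
it is `C`-balanced for some `C > 0`. -/
theorem stmt_15 {A : Type*} [Fintype A] [DecidableEq A] (x : ℕ → A) :
    (∃ C : ℕ, ∀ n : ℕ, ∃ S : Finset (A → ℕ), S.card ≤ C ∧
        ∀ p : ℕ, (fun b => (List.ofFn fun j : Fin n => x (p + j)).count b) ∈ S) ↔
      ∃ C : ℕ, 0 < C ∧ ∀ n p q : ℕ, ∀ b : A,
        |((List.ofFn fun j : Fin n => x (p + j)).count b : ℤ) -
          ((List.ofFn fun j : Fin n => x (q + j)).count b : ℤ)| ≤ (C : ℤ) := by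
  constructor
  · rintro ⟨C, hC⟩
    refine ⟨C + 1, C.succ_pos, fun n p q b => ?_⟩
    obtain ⟨S, hcard, hS⟩ := hC n
    exact (abs_parikhVector_sub_lt_card x n b hS p q).le.trans
      (by exact_mod_cast hcard.trans C.le_succ)
  · rintro ⟨C, -, hbal⟩
    exact ⟨_, fun n => exists_parikhVector_mem_card_le x n C fun p b => hbal n p 0 b⟩
end

section
/- Let f be the morphism 0 ↦ 00011, 1 ↦ 01100. If w is an infinite binary word such that f(w) has a prefix of the form 0001·u·v with u, v nonempty and Abelian equivalent, then w has a prefix of the form 0x0y0 with |x| = |y|. -/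
/-!
Let `N n` be the number of 1s among the first `n` letters of `f w`. Both images of `f` have
length 5 and contain exactly two 1s, so `N n = 2 ⌊n / 5⌋ + N'`, where `N'` counts the 1s in the
first `n mod 5` letters of the block `f (w ⌊n / 5⌋)`. With `L = |u| = |v|`, Abelian equivalence of
`u` and `v` gives `2 N (L + 4) = N (2L + 4) + 1`, the `+ 1` coming from the single 1 in `0001`.
Running through the residues of `L` mod 5 and the two possible blocks shows that this forces
`L = 5a` with `w a = w (2a) = 0`. Since also `w 0 = 0` (the second letter of `f w` is 0), the
word `w` begins with `0 x 0 y 0` where `x = w[1, a)` and `y = w[a + 1, 2a)`.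
-/

theorem map_range_eq_of_isPrefix {α : Type*} {l p : List α} {x : ℕ → α}
    (hl : ∀ i (h : i < l.length), l.get ⟨i, h⟩ = x i) (hp : p <+: l) :
    (List.range p.length).map x = p :=
  List.ext_getElem (by simp) fun i _ h => by
    rw [List.getElem_map, List.getElem_range, hp.getElem h, ← hl i (h.trans_le hp.length_le),
      List.get_eq_getElem]

theorem two_mul_count_map_range_of_count_eq {α : Type*} [DecidableEq α] {p u v : List α}
    {x : ℕ → α} (hl : ∀ i (h : i < (p ++ u ++ v).length), (p ++ u ++ v).get ⟨i, h⟩ = x i)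
    (huv : ∀ c, u.count c = v.count c) (b : α) :
    2 * ((List.range (p.length + u.length)).map x).count b =
      ((List.range (p.length + 2 * u.length)).map x).count b + p.count b := by
  have hvu : v.length = u.length := (List.perm_iff_count.2 fun c => (huv c).symm).length_eq
  have hpu := map_range_eq_of_isPrefix hl (List.prefix_append (p ++ u) v)
  have hpuv := map_range_eq_of_isPrefix hl (List.prefix_refl _)
  rw [List.length_append] at hpu
  rw [List.length_append, List.length_append, hvu, add_assoc, ← two_mul] at hpuv
  rw [hpu, hpuv, List.count_append, List.count_append, List.count_append, huv b]
  ring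

theorem count_map_range_of_uniform {α β : Type*} [DecidableEq β] {f : α → List β} {k d : ℕ}
    {b z : β} (hk : 0 < k) (hlen : ∀ c, (f c).length = k) (hcount : ∀ c, (f c).count b = d)
    {w : ℕ → α} {x : ℕ → β} (hx : ∀ n, x n = (f (w (n / k))).getD (n % k) z) (n : ℕ) :
    ((List.range n).map x).count b = d * (n / k) + ((f (w (n / k))).take (n % k)).count b := by
  induction n with
  | zero => simp
  | succ n ih =>
    set l := f (w (n / k))
    have hr : n % k < l.length := by rw [hlen]; exact Nat.mod_lt n hk
    have hn : n % k + k * (n / k) = n := Nat.mod_add_div n k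
    rw [List.range_succ, List.map_append, List.count_append, ih, List.map_singleton, hx n,
      List.getD_eq_getElem _ _ hr, add_assoc, ← List.count_append, List.take_concat_get' _ _ hr]
    rcases Nat.lt_or_ge (n % k + 1) k with h | h
    · obtain ⟨hq, hr'⟩ := (Nat.div_mod_unique (a := n + 1) (d := n / k) (c := n % k + 1) hk).2
        ⟨by linarith, h⟩
      rw [hq, hr']
    · have hmod : n % k + 1 = k := le_antisymm (Nat.mod_lt n hk) h
      obtain ⟨hq, hr'⟩ := (Nat.div_mod_unique (a := n + 1) (d := n / k + 1) (c := 0) hk).2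
        ⟨by linarith [mul_add k (n / k) 1], hk⟩
      rw [hq, hr', List.take_of_length_le ((hlen _).trans_le hmod.ge), hcount]
      simp [mul_add]

theorem exists_append_eq_map_range {α : Type*} (w : ℕ → α) {z : α} {a : ℕ} (ha : 0 < a)
    (h₀ : w 0 = z) (h₁ : w a = z) (h₂ : w (2 * a) = z) :
    ∃ A B : List α, A.length = B.length ∧
      [z] ++ A ++ [z] ++ B ++ [z] = (List.range (2 * a + 1)).map w := by
  obtain ⟨k, rfl⟩ := Nat.exists_eq_add_one_of_ne_zero ha.ne'
  refine ⟨(List.range' 1 k).map w, (List.range' (k + 2) k).map w, by simp, ?_⟩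
  rw [List.range_eq_range', show 2 * (k + 1) + 1 = 1 + k + 1 + k + 1 by ring]
  subst h₀
  simp only [← List.range'_append, List.map_append, List.range'_one, List.map_cons, List.map_nil,
    zero_add, one_mul]
  rw [add_comm 1 k, h₁, show k + 1 + 1 + k = 2 * (k + 1) by ring, h₂]

def morph : Fin 2 → List (Fin 2) := ![[0, 0, 0, 1, 1], [0, 1, 1, 0, 0]]

theorem count_one_take_morph (c : Fin 2) {r : ℕ} (hr : r < 5) :
    ((morph c).take r).count 1 = if c = 0 then r / 4 else 2 * r / 3 := by
  fin_cases c <;> interval_cases r <;> rfl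

theorem five_dvd_of_two_mul_count_one_eq (L : ℕ) (c c' : Fin 2)
    (h : 2 * (2 * ((4 + L) / 5) + ((morph c).take ((4 + L) % 5)).count 1) =
      2 * ((4 + 2 * L) / 5) + ((morph c').take ((4 + 2 * L) % 5)).count 1 + 1) :
    5 ∣ L ∧ c = 0 ∧ c' = 0 := by
  rw [count_one_take_morph _ (Nat.mod_lt _ (by norm_num)),
    count_one_take_morph _ (Nat.mod_lt _ (by norm_num))] at h
  have hL : L % 5 = 0 ∨ L % 5 = 1 ∨ L % 5 = 2 ∨ L % 5 = 3 ∨ L % 5 = 4 := by omega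
  fin_cases c <;> fin_cases c' <;>
    simp only [Fin.zero_eta, Fin.mk_one, Fin.isValue, ↓reduceIte, one_ne_zero, and_self, and_true,
      and_false] at h ⊢ <;>
    omega

theorem stmt_16_general (f : Fin 2 → List (Fin 2))
    (hf0 : f 0 = [0, 0, 0, 1, 1]) (hf1 : f 1 = [0, 1, 1, 0, 0])
    (w : ℕ → Fin 2) (x : ℕ → Fin 2)
    (hx : ∀ n : ℕ, x n = (f (w (n / 5))).getD (n % 5) 0)
    (u v : List (Fin 2)) (hu : u ≠ [])
    (huv : ∀ c : Fin 2, u.count c = v.count c)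
    (hpre : ∀ i : ℕ, ∀ h : i < (([0, 0, 0, 1] : List (Fin 2)) ++ u ++ v).length,
      (([0, 0, 0, 1] : List (Fin 2)) ++ u ++ v).get ⟨i, h⟩ = x i) :
    ∃ a b : List (Fin 2), a.length = b.length ∧
      ∀ i : ℕ, ∀ h : i < (([0] : List (Fin 2)) ++ a ++ [0] ++ b ++ [0]).length,
        (([0] : List (Fin 2)) ++ a ++ [0] ++ b ++ [0]).get ⟨i, h⟩ = w i := by
  obtain rfl : f = morph := funext fun c => by fin_cases c <;> assumption
  have hw0 : w 0 = 0 := by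
    have h : (morph (w 0)).getD 1 0 = 0 := by simpa [hx] using (hpre 1 (by simp)).symm
    generalize w 0 = c at h ⊢
    fin_cases c <;> simp_all [morph]
  have key : 2 * ((List.range (4 + u.length)).map x).count 1 =
      ((List.range (4 + 2 * u.length)).map x).count 1 + 1 :=
    two_mul_count_map_range_of_count_eq hpre huv 1
  rw [count_map_range_of_uniform (d := 2) (by norm_num) (by decide) (by decide) hx,
    count_map_range_of_uniform (d := 2) (by norm_num) (by decide) (by decide) hx] at key
  obtain ⟨⟨a, ha⟩, hwa, hwb⟩ := five_dvd_of_two_mul_count_one_eq u.length (w _) (w _) key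
  have ha₀ : 0 < a := by have := List.length_pos_iff.2 hu; omega
  rw [ha, show (4 + 5 * a) / 5 = a by omega] at hwa
  rw [ha, show (4 + 2 * (5 * a)) / 5 = 2 * a by omega] at hwb
  obtain ⟨A, B, hAB, hw⟩ := exists_append_eq_map_range w ha₀ hw0 hwa hwb
  exact ⟨A, B, hAB, fun i h => (List.getElem_of_eq hw h).trans (by simp)⟩

/-- Let `f` be the 5-uniform morphism `0 ↦ 00011`, `1 ↦ 01100`, and let `x = f(w)`.
If `x` has a prefix `0001 ++ u ++ v` with `u, v` nonempty and Abelian equivalent, then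
`w` has a prefix of the form `0 ++ x' ++ 0 ++ y' ++ 0` with `|x'| = |y'|`. -/
theorem stmt_16 (f : Fin 2 → List (Fin 2))
    (hf0 : f 0 = [0, 0, 0, 1, 1]) (hf1 : f 1 = [0, 1, 1, 0, 0])
    (w : ℕ → Fin 2) (x : ℕ → Fin 2)
    (hx : ∀ n : ℕ, x n = (f (w (n / 5))).getD (n % 5) 0)
    (u v : List (Fin 2)) (hu : u ≠ []) (hv : v ≠ [])
    (huv : ∀ c : Fin 2, u.count c = v.count c)
    (hpre : ∀ i : ℕ, ∀ h : i < (([0, 0, 0, 1] : List (Fin 2)) ++ u ++ v).length,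
      (([0, 0, 0, 1] : List (Fin 2)) ++ u ++ v).get ⟨i, h⟩ = x i) :
    ∃ a b : List (Fin 2), a.length = b.length ∧
      ∀ i : ℕ, ∀ h : i < (([0] : List (Fin 2)) ++ a ++ [0] ++ b ++ [0]).length,
        (([0] : List (Fin 2)) ++ a ++ [0] ++ b ++ [0]).get ⟨i, h⟩ = w i :=
  stmt_16_general f hf0 hf1 w x hx u v hu huv hpre
end

section
/- Let h be the morphism 0 ↦ 01011111, 1 ↦ 11101111 and w its fixed point starting with 0. Then w has no prefix of the form 0x0y0 with |x| = |y|. -/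
/-!
The fixed point satisfies `w (8n + r) = (h (w n))[r]`. A prefix `0x0y0` with `|x| = |y|` gives
`w a = w (2a) = 0` for `a = |x| + 1 ≥ 1`. Write `a = 8q + r`: the zeros of `h 0 = 01011111`
sit at positions `0, 2` and that of `h 1 = 11101111` at `3`, so `r ∈ {0, 2, 3}`, and
`2a = 8 (2q) + 2r` puts a zero at position `2r` of `h (w (2q))`. Position `4` or `6` is never `0`,
so `r = 0`, and then `w q = w (2q) = 0` with `1 ≤ q < a`: infinite descent.
-/

namespace List

variable {α β : Type*} {f : α → List β} {k : ℕ}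

theorem length_flatMap_of_length_eq (hf : ∀ a, (f a).length = k) (l : List α) :
    (l.flatMap f).length = k * l.length := by
  simp [length_flatMap, hf, mul_comm]

theorem getElem?_flatMap_of_length_eq (hf : ∀ a, (f a).length = k) (l : List α) (n : ℕ)
    {r : ℕ} (hr : r < k) : (l.flatMap f)[k * n + r]? = l[n]?.bind fun a => (f a)[r]? := by
  induction l generalizing n with
  | nil => simp
  | cons a t ih =>
    rw [flatMap_cons]
    cases n with
    | zero => simp [getElem?_append_left, hf, hr]
    | succ n =>
      rw [getElem?_append_right (by rw [hf]; nlinarith), hf,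
        show k * (n + 1) + r - k = k * n + r by rw [Nat.mul_succ]; omega, ih]
      simp

end List

theorem uniformMorphism_fixedPoint_getElem? {α : Type*} {f : α → List α} {k : ℕ}
    (hf : ∀ a, (f a).length = k) (hk : 1 < k) (a₀ : α) (w : ℕ → α)
    (hw : ∀ m : ℕ, ∀ i : ℕ, ∀ hi : i < ((fun l => l.flatMap f)^[m] [a₀]).length,
      w i = ((fun l => l.flatMap f)^[m] [a₀]).get ⟨i, hi⟩)
    (n : ℕ) {r : ℕ} (hr : r < k) : (f (w n))[r]? = some (w (k * n + r)) := by
  set L : ℕ → List α := fun m => (fun l => l.flatMap f)^[m] [a₀]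
  have length_L (m : ℕ) : (L m).length = k ^ m := by
    induction m with
    | zero => rfl
    | succ m ih =>
      simp only [L, Function.iterate_succ_apply', List.length_flatMap_of_length_eq hf] at ih ⊢
      rw [ih, pow_succ, mul_comm]
  have getElem?_L (m i : ℕ) (hi : i < k ^ m) : (L m)[i]? = some (w i) := by
    rw [← length_L] at hi
    rw [List.getElem?_eq_getElem hi, hw m i hi, List.get_eq_getElem]
  have hn : n < k ^ n := Nat.lt_pow_self hk
  have h := getElem?_L (n + 1) (k * n + r) (by rw [pow_succ]; nlinarith)
  simp only [L, Function.iterate_succ_apply'] at h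
  rwa [List.getElem?_flatMap_of_length_eq hf _ _ hr, getElem?_L n n hn, Option.bind_some] at h

def h8 : Fin 2 → List (Fin 2) := ![[0, 1, 0, 1, 1, 1, 1, 1], [1, 1, 1, 0, 1, 1, 1, 1]]

theorem h8_getElem?_eq_zero {b : Fin 2} {r : ℕ} :
    (h8 b)[r]? = some 0 ↔ b = 0 ∧ (r = 0 ∨ r = 2) ∨ b = 1 ∧ r = 3 := by
  fin_cases b <;> rcases r with _ | _ | _ | _ | _ | _ | _ | _ | r <;> simp [h8]

theorem h8_fixedPoint_double_ne_zero {w : ℕ → Fin 2}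
    (hrec : ∀ n r, r < 8 → (h8 (w n))[r]? = some (w (8 * n + r))) :
    ∀ a, 0 < a → w a = 0 → w (2 * a) ≠ 0 := by
  intro a
  induction a using Nat.strong_induction_on with
  | _ a ih =>
  intro ha hwa hw2a
  obtain ⟨q, r, hr, rfl⟩ : ∃ q r, r < 8 ∧ a = 8 * q + r :=
    ⟨a / 8, a % 8, Nat.mod_lt _ (by norm_num), by omega⟩
  have hwq := hrec q r hr
  rw [hwa, h8_getElem?_eq_zero] at hwq
  have zero_in_image (s : ℕ) (hs : s < 8) (h : 2 * (8 * q + r) = 8 * (2 * q) + s) :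
      (h8 (w (2 * q)))[s]? = some 0 := by
    rw [hrec (2 * q) s hs, ← h, hw2a]
  rcases hwq with ⟨hq, rfl | rfl⟩ | ⟨-, rfl⟩
  · have hw2q : w (2 * q) = 0 := by
      simpa using h8_getElem?_eq_zero.mp (zero_in_image 0 (by norm_num) (by ring))
    exact ih q (by omega) (by omega) hq hw2q
  · simpa using h8_getElem?_eq_zero.mp (zero_in_image 4 (by norm_num) (by ring))
  · simpa using h8_getElem?_eq_zero.mp (zero_in_image 6 (by norm_num) (by ring))

/-- Let `h` be the morphism `0 ↦ 01011111`, `1 ↦ 11101111` and `w` its fixed point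
starting with `0` (every iterate `h^[m] 0` is a prefix of `w`). Then `w` has no prefix of
the form `0 ++ x ++ 0 ++ y ++ 0` with `|x| = |y|`. -/
theorem stmt_17 (h : Fin 2 → List (Fin 2))
    (hh0 : h 0 = [0, 1, 0, 1, 1, 1, 1, 1]) (hh1 : h 1 = [1, 1, 1, 0, 1, 1, 1, 1])
    (w : ℕ → Fin 2)
    (hw : ∀ m : ℕ, ∀ i : ℕ, ∀ hi : i < ((fun l => l.flatMap h)^[m] [0]).length,
      w i = ((fun l => l.flatMap h)^[m] [0]).get ⟨i, hi⟩) :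
    ¬ ∃ x y : List (Fin 2), x.length = y.length ∧
      ∀ i : ℕ, ∀ hi : i < (([0] : List (Fin 2)) ++ x ++ [0] ++ y ++ [0]).length,
        (([0] : List (Fin 2)) ++ x ++ [0] ++ y ++ [0]).get ⟨i, hi⟩ = w i := by
  obtain rfl : h = h8 := funext fun b => by fin_cases b <;> assumption
  rintro ⟨x, y, hxy, hpre⟩
  have hrec n r (hr : r < 8) := uniformMorphism_fixedPoint_getElem? (k := 8)
    (fun b => by fin_cases b <;> rfl) (by norm_num) 0 w hw n hr
  refine h8_fixedPoint_double_ne_zero hrec (x.length + 1) (by omega) ?_ ?_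
  · rw [← hpre (x.length + 1) (by simp)]
    grind
  · rw [← hpre (2 * (x.length + 1)) (by simp; omega)]
    grind
end

section
/- Fix M ≥ 1 and define the periodic integer sequence v by v(n) = 2^(n mod M) if n mod M ≠ M-1, and v(n) = 1 - 2^(M-1) if n mod M = M-1. Then for all i ≤ j and i' ≤ j', if the sums v(i) + ... + v(j-1) and v(i') + ... + v(j'-1) are equal, then j - i ≡ j' - i' (mod M). -/
/-!
The partial sums of `v` are `2 ^ (k % M) - 1`, so an equality of two range sums becomes
`2 ^ (j % M) + 2 ^ (i' % M) = 2 ^ (j' % M) + 2 ^ (i % M)`. By uniqueness of binary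
expansions the two pairs of exponents agree up to order, hence
`j % M + i' % M = j' % M + i % M`, which is the congruence `j - i ≡ j' - i' [MOD M]`.
-/

namespace Nat

theorem bitIndices_two_pow_add_two_pow {a b : ℕ} (hab : a < b) :
    (2 ^ a + 2 ^ b).bitIndices = [a, b] := by
  simpa using
    bitIndices_sum_map_two_pow (L := [a, b]) (by simp [List.sortedLT_iff_pairwise, hab])

theorem bitIndices_two_pow_add_self (a : ℕ) : (2 ^ a + 2 ^ a).bitIndices = [a + 1] := by
  rw [← two_mul, ← pow_succ', bitIndices_two_pow]

theorem eq_and_eq_of_two_pow_add_two_pow_eq {a b c d : ℕ} (hab : a ≤ b) (hcd : c ≤ d)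
    (h : 2 ^ a + 2 ^ b = 2 ^ c + 2 ^ d) : a = c ∧ b = d := by
  have h := congrArg bitIndices h
  rcases hab.lt_or_eq with hab | rfl <;> rcases hcd.lt_or_eq with hcd | rfl
  · simpa [bitIndices_two_pow_add_two_pow hab, bitIndices_two_pow_add_two_pow hcd] using h
  · simp [bitIndices_two_pow_add_two_pow hab, bitIndices_two_pow_add_self] at h
  · simp [bitIndices_two_pow_add_two_pow hcd, bitIndices_two_pow_add_self] at h
  · simpa [bitIndices_two_pow_add_self] using h

theorem add_eq_add_of_two_pow_add_two_pow_eq {a b c d : ℕ}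
    (h : 2 ^ a + 2 ^ b = 2 ^ c + 2 ^ d) : a + b = c + d := by
  wlog hab : a ≤ b generalizing a b
  · rw [add_comm a, this ((add_comm _ _).trans h) (by omega)]
  wlog hcd : c ≤ d generalizing c d
  · rw [add_comm c, this (h.trans (add_comm _ _)) (by omega)]
  obtain ⟨rfl, rfl⟩ := eq_and_eq_of_two_pow_add_two_pow_eq hab hcd h
  rfl

theorem sub_modEq_sub_of_mod_add_mod_eq {M i j i' j' : ℕ} (hij : i ≤ j) (hij' : i' ≤ j')
    (h : j % M + i' % M = j' % M + i % M) : j - i ≡ j' - i' [MOD M] := by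
  have hsum : j + i' ≡ j' + i [MOD M] := by
    unfold ModEq
    rw [Nat.add_mod, h, ← Nat.add_mod]
  refine ModEq.add_right_cancel' (i + i') ?_
  rwa [show j - i + (i + i') = j + i' by omega, show j' - i' + (i + i') = j' + i by omega]

end Nat

theorem sum_range_eq_two_pow_mod_sub_one {M : ℕ} (hM : 1 ≤ M) {v : ℕ → ℤ}
    (hv : ∀ n : ℕ, v n = if n % M = M - 1 then 1 - 2 ^ (M - 1) else 2 ^ (n % M)) (k : ℕ) :
    ∑ n ∈ Finset.range k, v n = 2 ^ (k % M) - 1 := by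
  induction k with
  | zero => simp
  | succ k ih =>
    rw [Finset.sum_range_succ, ih, hv k]
    have hdiv := Nat.div_add_mod k M
    by_cases hk : k % M = M - 1
    · have hk1 : (k + 1) % M = 0 := by
        rw [show k + 1 = M * (k / M + 1) by rw [mul_add]; omega, Nat.mul_mod_right]
      rw [if_pos hk, hk1, hk]
      ring
    · have hk1 : (k + 1) % M = k % M + 1 := by
        have := k.mod_lt hM
        rw [show k + 1 = k % M + 1 + M * (k / M) by omega, Nat.add_mul_mod_self_left,
          Nat.mod_eq_of_lt (by omega)]
      rw [if_neg hk, hk1, pow_succ]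
      ring

/-- For `M ≥ 1` and the `M`-periodic sequence `v(n) = 2^(n mod M)` if `n mod M ≠ M - 1`
and `v(n) = 1 - 2^(M-1)` otherwise: if two sums of consecutive terms of `v` are equal,
then the lengths of the two ranges are congruent mod `M`. -/
theorem stmt_18 (M : ℕ) (hM : 1 ≤ M) (v : ℕ → ℤ)
    (hv : ∀ n : ℕ, v n = if n % M = M - 1 then 1 - 2 ^ (M - 1) else 2 ^ (n % M))
    (i j i' j' : ℕ) (hij : i ≤ j) (hij' : i' ≤ j')
    (hsum : (∑ n ∈ Finset.Ico i j, v n) = ∑ n ∈ Finset.Ico i' j', v n) :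
    Nat.ModEq M (j - i) (j' - i') := by
  simp only [Finset.sum_Ico_eq_sub v hij, Finset.sum_Ico_eq_sub v hij',
    sum_range_eq_two_pow_mod_sub_one hM hv] at hsum
  have hpow : (2 : ℤ) ^ (j % M) + 2 ^ (i' % M) = 2 ^ (j' % M) + 2 ^ (i % M) := by linarith
  exact Nat.sub_modEq_sub_of_mod_add_mod_eq hij hij'
    (Nat.add_eq_add_of_two_pow_add_two_pow_eq (by exact_mod_cast hpow))
end

section
/- Let M ≥ 1, let v be the M-periodic sequence v(n) = 2^(n mod M) for n mod M ≠ M-1 and v(n) = 1 - 2^(M-1) otherwise, let u : ℕ → {0,1} be any sequence, and define w(n) = u(n)·2^M + v(n). If i ≤ j ≤ k and the sums w(i)+...+w(j-1) and w(j)+...+w(k-1) are equal, then j - i ≡ k - j (mod M) and u(i)+...+u(j-1) = u(j)+...+u(k-1). -/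
/-!
The partial sums of `v` telescope: `v(p) + ⋯ + v(q-1) = 2^(q mod M) - 2^(p mod M)`. Writing
`a, b, c` for the residues of `i, j, k` and `A, B` for the two sums of `u`, the hypothesis becomes
`(A - B) 2^M = 2^a + 2^c - 2^(b+1)`. The right side has absolute value below `2^M`, so it vanishes
and `A = B`. Finally `2^a + 2^c = 2^(b+1)` forces `a = b = c`, since otherwise the larger of
`2^a, 2^c` would lie strictly between two consecutive powers of two.
-/

def binaryPeriodic (M n : ℕ) : ℤ :=
  if n % M = M - 1 then 1 - 2 ^ (M - 1) else 2 ^ (n % M)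

lemma sum_range_binaryPeriodic {M : ℕ} (hM : 1 ≤ M) (i : ℕ) :
    ∑ n ∈ Finset.range i, binaryPeriodic M n = 2 ^ (i % M) - 1 := by
  induction i with
  | zero => simp
  | succ i ih =>
    rw [Finset.sum_range_succ, ih, binaryPeriodic, ← Nat.mod_add_mod i M 1]
    have hlt : i % M < M := Nat.mod_lt _ hM
    split_ifs with h
    · rw [h, Nat.sub_add_cancel hM, Nat.mod_self]
      ring
    · rw [Nat.mod_eq_of_lt (show i % M + 1 < M by omega), pow_succ]
      ring

lemma sum_Ico_binaryPeriodic {M : ℕ} (hM : 1 ≤ M) {p q : ℕ} (hpq : p ≤ q) :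
    ∑ n ∈ Finset.Ico p q, binaryPeriodic M n = 2 ^ (q % M) - 2 ^ (p % M) := by
  rw [Finset.sum_Ico_eq_sub _ hpq, sum_range_binaryPeriodic hM, sum_range_binaryPeriodic hM]
  ring

lemma abs_two_pow_add_two_pow_sub_two_pow_succ_lt {M a b c : ℕ} (ha : a < M) (hb : b < M)
    (hc : c < M) : |(2 : ℤ) ^ a + 2 ^ c - 2 ^ (b + 1)| < 2 ^ M := by
  have bounds : ∀ r < M, (1 : ℤ) ≤ 2 ^ r ∧ (2 : ℤ) ^ r ≤ 2 ^ (M - 1) := fun r hr =>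
    ⟨one_le_pow₀ (by norm_num), pow_le_pow_right₀ (by norm_num) (by omega)⟩
  have hM : (2 : ℤ) ^ M = 2 * 2 ^ (M - 1) := by
    rw [← pow_succ', Nat.sub_add_cancel (by omega)]
  obtain ⟨ha₁, ha₂⟩ := bounds a ha
  obtain ⟨hb₁, hb₂⟩ := bounds b hb
  obtain ⟨hc₁, hc₂⟩ := bounds c hc
  rw [abs_lt, pow_succ]
  constructor <;> linarith

lemma eq_of_two_pow_add_two_pow_eq_two_pow_succ {a b c : ℕ} (h : 2 ^ a + 2 ^ c = 2 ^ (b + 1)) :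
    a = b ∧ c = b := by
  have hac : a = c := by
    have between : ∀ {m n : ℕ}, m < n → 2 ^ m + 2 ^ n ≠ 2 ^ (b + 1) := by
      intro m n hmn heq
      have hlt : 2 ^ m < 2 ^ n := Nat.pow_lt_pow_right (by norm_num) hmn
      have h₁ : 2 ^ n < 2 ^ (b + 1) := by have := Nat.two_pow_pos m; omega
      have h₂ : 2 ^ (b + 1) < 2 ^ (n + 1) := by rw [← heq, pow_succ 2 n]; omega
      rw [Nat.pow_lt_pow_iff_right (by norm_num)] at h₁ h₂
      omega
    rcases lt_trichotomy a c with hlt | heq | hgt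
    · exact absurd h (between hlt)
    · exact heq
    · exact absurd ((add_comm _ _).trans h) (between hgt)
  subst hac
  have hab : 2 ^ a = 2 ^ b := by rw [pow_succ] at h; omega
  exact ⟨Nat.pow_right_injective le_rfl hab, Nat.pow_right_injective le_rfl hab⟩

theorem stmt_19_general (M : ℕ) (hM : 1 ≤ M) (v : ℕ → ℤ)
    (hv : ∀ n : ℕ, v n = if n % M = M - 1 then 1 - 2 ^ (M - 1) else 2 ^ (n % M))
    (u : ℕ → ℤ)
    (w : ℕ → ℤ) (hw : ∀ n : ℕ, w n = u n * 2 ^ M + v n)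
    (i j k : ℕ) (hij : i ≤ j) (hjk : j ≤ k)
    (hsum : (∑ n ∈ Finset.Ico i j, w n) = ∑ n ∈ Finset.Ico j k, w n) :
    Nat.ModEq M (j - i) (k - j) ∧
      (∑ n ∈ Finset.Ico i j, u n) = ∑ n ∈ Finset.Ico j k, u n := by
  have hsum_Ico_w : ∀ {p q : ℕ}, p ≤ q → ∑ n ∈ Finset.Ico p q, w n
      = (∑ n ∈ Finset.Ico p q, u n) * 2 ^ M + (2 ^ (q % M) - 2 ^ (p % M)) := fun hpq => by
    rw [← sum_Ico_binaryPeriodic hM hpq, Finset.sum_mul, ← Finset.sum_add_distrib]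
    exact Finset.sum_congr rfl fun n _ => (hw n).trans (by rw [hv, binaryPeriodic])
  rw [hsum_Ico_w hij, hsum_Ico_w hjk] at hsum
  have hres : ∀ n, n % M < M := (Nat.mod_lt · hM)
  have hbalance : (2 : ℤ) ^ (i % M) + 2 ^ (k % M) - 2 ^ (j % M + 1) = 0 :=
    Int.eq_zero_of_abs_lt_dvd (m := 2 ^ M)
      ⟨(∑ n ∈ Finset.Ico i j, u n) - ∑ n ∈ Finset.Ico j k, u n, by rw [pow_succ]; linarith⟩
      (abs_two_pow_add_two_pow_sub_two_pow_succ_lt (hres i) (hres j) (hres k))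
  obtain ⟨hij_mod, hkj_mod⟩ :=
    eq_of_two_pow_add_two_pow_eq_two_pow_succ (by exact_mod_cast sub_eq_zero.mp hbalance)
  refine ⟨?_, ?_⟩
  · exact (Nat.sub_mod_eq_zero_of_mod_eq hij_mod.symm).trans
      (Nat.sub_mod_eq_zero_of_mod_eq hkj_mod).symm
  · rw [hij_mod, hkj_mod] at hsum
    have : (2 : ℤ) ^ M ≠ 0 := by positivity
    exact mul_right_cancel₀ this (by linarith)

/-- For `M ≥ 1`, `v` the `M`-periodic sequence as above, `u : ℕ → {0,1}` arbitrary, and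
`w(n) = u(n)·2^M + v(n)`: if `i ≤ j ≤ k` and the sums `w(i)+⋯+w(j-1)` and
`w(j)+⋯+w(k-1)` are equal, then `j - i ≡ k - j (mod M)` and
`u(i)+⋯+u(j-1) = u(j)+⋯+u(k-1)`. -/
theorem stmt_19 (M : ℕ) (hM : 1 ≤ M) (v : ℕ → ℤ)
    (hv : ∀ n : ℕ, v n = if n % M = M - 1 then 1 - 2 ^ (M - 1) else 2 ^ (n % M))
    (u : ℕ → ℤ) (hu : ∀ n : ℕ, u n = 0 ∨ u n = 1)
    (w : ℕ → ℤ) (hw : ∀ n : ℕ, w n = u n * 2 ^ M + v n)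
    (i j k : ℕ) (hij : i ≤ j) (hjk : j ≤ k)
    (hsum : (∑ n ∈ Finset.Ico i j, w n) = ∑ n ∈ Finset.Ico j k, w n) :
    Nat.ModEq M (j - i) (k - j) ∧
      (∑ n ∈ Finset.Ico i j, u n) = ∑ n ∈ Finset.Ico j k, u n :=
  stmt_19_general M hM v hv u w hw i j k hij hjk hsum
end
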